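/- arXiv:1607.02420 — 12 statements merged into one kernel-verified Lean document; each statement's English description precedes it below -/
import Mathlib

section
/- Fix a real number p with 0 < p and p ≤ (1/3)·(1 − 8/(1 + 3√57)^{1/3} + (1 + 3√57)^{1/3}) (the unique root in (0,1) of 2p² = (1−p)³, approximately 0.361). Then the optimal gain per level of the strategic miner in the immediate-release game equals his fair share: lim_{k→∞} g_k(0,0)/k = p. (Consequently FRONTIER is a Nash equilibrium when every miner has relative computational power at most this threshold.) -/
/-- The strategic miner's optimal expected gain over `k` levels in the
immediate-release game, starting from the state where his branch has length `a`
and the honest miners' branch has length `b` (meaningful for `a ≤ b + 1`).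
We have `gain p 0 a b = 0`; for `k ≥ 1`, at a winning state (`a = b + 1`) the
miner is paid `b + 1` and the game restarts at `(0,0)` one level later;
otherwise he may capitulate to any state `(0, s)` with `s < b` (taking the best
such option) or keep mining, in which case he advances to `(a+1, b)` with
probability `p` and the honest miners advance to `(a, b+1)` (one level deeper)
with probability `1 - p`. -/
noncomputable def gain (p : ℝ) : ℕ → ℕ → ℕ → ℝ
  | 0, _, _ => 0
  | k + 1, a, b =>
    if h : b + 1 ≤ a then
      gain p k 0 0 + (b + 1 : ℕ)
    else
      ((List.range b).attach.map (fun s => gain p (k + 1) 0 s.1)).foldr max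
        (p * gain p (k + 1) (a + 1) b + (1 - p) * gain p k a (b + 1))
termination_by k a b => (k, b, b + 1 - a)
decreasing_by
  all_goals
    first
      | exact Prod.Lex.left _ _ (Nat.lt_succ_self _)
      | exact Prod.Lex.right _ (Prod.Lex.right _ (by omega))
      | exact Prod.Lex.right _ (Prod.Lex.left _ _ (List.mem_range.mp s.2))

private lemma foldr_max_le {B init : ℝ} (l : List ℝ) (h0 : init ≤ B)
    (h : ∀ x ∈ l, x ≤ B) : l.foldr max init ≤ B := by
  induction l with
  | nil => exact h0
  | cons y t ih =>
      exact max_le (h y (by simp)) (ih (fun x hx => h x (by simp [hx])))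

private lemma le_foldr_max_of_mem {init x : ℝ} (l : List ℝ) (hx : x ∈ l) :
    x ≤ l.foldr max init := by
  induction l with
  | nil => simp at hx
  | cons y t ih =>
      rcases List.mem_cons.mp hx with h | h
      · subst h; exact le_max_left _ _
      · exact (ih h).trans (le_max_right _ _)


noncomputable def Psi (p : ℝ) (a b : ℕ) : ℝ :=
  if a = 0 then 0
  else if b + 1 ≤ a then (b : ℝ) + 1 - p
  else max 0 ((p / (1 - p)) ^ (b - a + 1) * ((b : ℝ) + 1) -
      (if b = a then 2 * (p / (1 - p)) - (1 - p) else 2 * (p / (1 - p)) ^ 2))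

private lemma Psi_zero (p : ℝ) (b : ℕ) : Psi p 0 b = 0 := by
  rw [Psi]; simp

private lemma Psi_win (p : ℝ) {a b : ℕ} (h0 : a ≠ 0) (h : b + 1 ≤ a) :
    Psi p a b = (b : ℝ) + 1 - p := by
  rw [Psi, if_neg h0, if_pos h]

private lemma Psi_mid (p : ℝ) {a b : ℕ} (h0 : a ≠ 0) (hab : a ≤ b) :
    Psi p a b = max 0 ((p / (1 - p)) ^ (b - a + 1) * ((b : ℝ) + 1) -
      (if b = a then 2 * (p / (1 - p)) - (1 - p) else 2 * (p / (1 - p)) ^ 2)) := by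
  rw [Psi, if_neg h0, if_neg (by omega)]

private lemma Psi_nonneg (p : ℝ) (hp1 : p ≤ 1) (a b : ℕ) : 0 ≤ Psi p a b := by
  rw [Psi]
  split_ifs with h1 h2 h3
  · exact le_rfl
  · have : (0:ℝ) ≤ (b:ℝ) := Nat.cast_nonneg b
    linarith
  · exact le_max_left _ _
  · exact le_max_left _ _

private lemma pow_mul_le (q : ℝ) (hq0 : 0 ≤ q) (hq34 : q ≤ 3 / 4) :
    ∀ b : ℕ, 2 ≤ b → q ^ b * ((b : ℝ) + 1) ≤ 3 * q ^ 2 := by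
  intro b hb
  induction b, hb using Nat.le_induction with
  | base => push_cast; nlinarith [sq_nonneg q]
  | succ b hb ih =>
      have hbR : (2:ℝ) ≤ (b:ℝ) := by exact_mod_cast hb
      have hqb : (0:ℝ) ≤ q ^ b := pow_nonneg hq0 b
      have step : q ^ (b+1) * (((b:ℝ) + 1) + 1) ≤ q ^ b * ((b : ℝ) + 1) := by
        have h : q ^ (b+1) = q ^ b * q := pow_succ q b
        rw [h]
        have h4 : q * ((b:ℝ)+2) ≤ (b:ℝ)+1 := by
          nlinarith [mul_le_mul_of_nonneg_right hq34 (by linarith : (0:ℝ) ≤ (b:ℝ)+2)]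
        have h5 := mul_le_mul_of_nonneg_left h4 hqb
        nlinarith [h5]
      push_cast
      push_cast at ih
      linarith

private lemma p_half {p : ℝ} (hp : 0 < p) (hP : 2 * p ^ 2 ≤ (1 - p) ^ 3) : p < 1 / 2 := by
  nlinarith [hP, hp, sq_nonneg p, sq_nonneg (1 - p)]

private lemma p_25 {p : ℝ} (hp : 0 < p) (hP : 2 * p ^ 2 ≤ (1 - p) ^ 3) : p ≤ 2 / 5 := by
  nlinarith [hP, hp, sq_nonneg p, sq_nonneg (1 - p), sq_nonneg (p - 2/5)]

private lemma p_G {p : ℝ} (hp : 0 < p) (hP : 2 * p ^ 2 ≤ (1 - p) ^ 3) :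
    2 * p * (1 - 2 * p) ≤ (1 - p) ^ 3 := by
  have h2 := p_half hp hP
  nlinarith [hp, h2, sq_nonneg (p - 5/12), sq_nonneg p, mul_pos hp hp,
    mul_nonneg hp.le (sq_nonneg (1 - 2*p))]

private lemma Psi_one_le {p : ℝ} (hp : 0 < p) (hP : 2 * p ^ 2 ≤ (1 - p) ^ 3) (b : ℕ) :
    Psi p 1 b ≤ 1 - p := by
  have hp2 : p < 1/2 := p_half hp hP
  have h1p : 0 < 1 - p := by linarith
  obtain ⟨q, hqdef⟩ : ∃ q : ℝ, q = p / (1 - p) := ⟨_, rfl⟩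
  have hq0 : 0 < q := by rw [hqdef]; exact div_pos hp h1p
  have hq : q * (1 - p) = p := by rw [hqdef]; exact div_mul_cancel₀ p (ne_of_gt h1p)
  have hp25 : p ≤ 2/5 := p_25 hp hP
  have hq23 : q ≤ 2/3 := by rw [hqdef, div_le_iff₀ h1p]; linarith
  have hq2 : q ^ 2 ≤ 1 - p := by
    rw [hqdef, div_pow, div_le_iff₀ (by positivity)]
    nlinarith [hP, sq_nonneg p]
  match b with
  | 0 => rw [Psi_win p (by omega) (by omega)]; norm_num
  | 1 =>
      rw [Psi_mid p (by omega) (by omega)]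
      have h1 : (1:ℕ) - 1 + 1 = 1 := by omega
      rw [if_pos rfl, h1]
      simp only [← hqdef]
      push_cast
      have h2 : q ^ 1 * ((1:ℝ) + 1) - (2 * q - (1 - p)) = 1 - p := by ring
      rw [h2]
      exact max_le h1p.le le_rfl
  | (b+2) =>
      rw [Psi_mid p (by omega) (by omega)]
      have h1 : b + 2 - 1 + 1 = b + 2 := by omega
      rw [if_neg (by omega), h1]
      simp only [← hqdef]
      refine max_le h1p.le ?_
      have h3 := pow_mul_le q hq0.le (by linarith) (b+2) (by omega)
      push_cast at h3 ⊢
      nlinarith [hq2, sq_nonneg q]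

set_option maxHeartbeats 1000000 in
private lemma key {p : ℝ} (hp : 0 < p) (hP : 2 * p ^ 2 ≤ (1 - p) ^ 3)
    (a b : ℕ) (hab : a ≤ b) :
    p * Psi p (a+1) b + (1 - p) * Psi p a (b+1) ≤ Psi p a b + p * (1 - p) := by
  have hp2 : p < 1/2 := p_half hp hP
  have h1p : 0 < 1 - p := by linarith
  rcases Nat.eq_zero_or_pos a with rfl | ha1
  · rw [Psi_zero, Psi_zero]
    have h1 := Psi_one_le hp hP b
    nlinarith [mul_le_mul_of_nonneg_left h1 hp.le]
  · obtain ⟨q, hqdef⟩ : ∃ q : ℝ, q = p / (1 - p) := ⟨_, rfl⟩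
    have hq0 : 0 < q := by rw [hqdef]; exact div_pos hp h1p
    have hq : q * (1 - p) = p := by rw [hqdef]; exact div_mul_cancel₀ p (ne_of_gt h1p)
    have hp25 : p ≤ 2/5 := p_25 hp hP
    have hq23 : q ≤ 2/3 := by rw [hqdef, div_le_iff₀ h1p]; linarith
    have hq1 : q < 1 := by linarith
    have hpq : p ≤ q := by rw [hqdef, le_div_iff₀ h1p]; nlinarith
    have hq1p : q ≤ 1 - p := by
      rw [hqdef, div_le_iff₀ h1p]
      nlinarith [hP, pow_pos hp 3]
    have hq2 : q ^ 2 ≤ 1 - p := by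
      rw [hqdef, div_pow, div_le_iff₀ (by positivity)]
      nlinarith [hP, sq_nonneg p]
    have hG : 2 * p * (1 - 2*p) ≤ (1 - p)^3 := p_G hp hP
    have hF4a : 2 * q^2 * (1 - q) ≤ p := by
      have e : 2 * q^2 * (1 - q) * (1 - p)^3 = (2 * p * (1 - 2*p)) * p := by
        rw [hqdef]; field_simp; ring
      refine le_of_mul_le_mul_right ?_ (pow_pos h1p 3)
      rw [e]; nlinarith [mul_le_mul_of_nonneg_right hG hp.le]
    have hF4b : 2 * q * (1 - q) ≤ 1 - p := by
      have e : 2 * q * (1 - q) * (1 - p)^2 = 2 * p * (1 - 2*p) := by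
        rw [hqdef]; field_simp; ring
      refine le_of_mul_le_mul_right ?_ (pow_pos h1p 2)
      rw [e]; nlinarith [hG]
    have haR : (1:ℝ) ≤ (a:ℝ) := by exact_mod_cast ha1
    obtain ⟨d, rfl⟩ : ∃ d, b = a + d := ⟨b - a, by omega⟩
    rcases d with _ | _ | e
    · -- d = 0 : diagonal cell
      have Pwin : Psi p (a+1) (a+0) = (a:ℝ) + 1 - p := by
        rw [Psi_win p (by omega) (by omega)]; push_cast; ring
      have Pmid : Psi p a (a+0) = q * ((a:ℝ)+1) - (2*q - (1-p)) := by
        rw [Psi_mid p (by omega) (by omega), if_pos (by omega)]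
        have h1 : a + 0 - a + 1 = 1 := by omega
        rw [h1]
        simp only [← hqdef]
        push_cast
        rw [max_eq_right (by nlinarith [hq0, haR, h1p])]
        ring
      have Pright : Psi p a (a+0+1) = q^2 * (a:ℝ) := by
        rw [Psi_mid p (by omega) (by omega), if_neg (by omega)]
        have h1 : a + 0 + 1 - a + 1 = 2 := by omega
        rw [h1]
        simp only [← hqdef]
        push_cast
        have e : q ^ 2 * ((a:ℝ) + 0 + 1 + 1) - 2 * q^2 = q^2 * (a:ℝ) := by ring
        rw [e, max_eq_right (by positivity)]
      rw [Pwin, Pmid, Pright]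
      have hzA : (p + p*q - q) * (a:ℝ) = 0 := by
        have hz : p + p*q - q = 0 := by linear_combination -hq
        rw [hz]; ring
      have hid2A : (1-p) * q^2 * (a:ℝ) = p * q * (a:ℝ) := by
        linear_combination (a:ℝ) * q * hq
      push_cast
      nlinarith [hzA, hid2A, hq1p, haR]
    · -- d = 1
      have Pup : Psi p (a+1) (a+1) = q * ((a:ℝ)+2) - (2*q - (1-p)) := by
        rw [Psi_mid p (by omega) (by omega), if_pos rfl]
        have h1 : a + 1 - (a+1) + 1 = 1 := by omega
        rw [h1]
        simp only [← hqdef]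
        push_cast
        rw [max_eq_right (by nlinarith [hq0, haR, h1p])]
        ring
      have Pmid : Psi p a (a+1) = q^2 * (a:ℝ) := by
        rw [Psi_mid p (by omega) (by omega), if_neg (by omega)]
        have h1 : a + 1 - a + 1 = 2 := by omega
        rw [h1]
        simp only [← hqdef]
        push_cast
        have e : q ^ 2 * ((a:ℝ) + 1 + 1) - 2 * q^2 = q^2 * (a:ℝ) := by ring
        rw [e, max_eq_right (by positivity)]
      have Pright0 : Psi p a (a+1+1) = max 0 (q^3 * ((a:ℝ)+3) - 2*q^2) := by
        rw [Psi_mid p (by omega) (by omega), if_neg (by omega)]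
        have h1 : a + 1 + 1 - a + 1 = 3 := by omega
        rw [h1]
        simp only [← hqdef]
        push_cast
        have e : q ^ 3 * ((a:ℝ) + 1 + 1 + 1) = q^3 * ((a:ℝ)+3) := by ring
        rw [e]
      rw [Pup, Pmid, Pright0]
      rcases le_or_gt (q^3 * ((a:ℝ)+3)) (2*q^2) with hE | hE
      · rw [max_eq_left (by linarith)]
        have h3 : p * q * (a:ℝ) ≤ q * q * (a:ℝ) :=
          mul_le_mul_of_nonneg_right (mul_le_mul_of_nonneg_right hpq hq0.le) (by positivity)
        nlinarith [h3]
      · rw [max_eq_right (by linarith)]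
        have hzq : (p*q + p*q^2 - q^2) * (a:ℝ) = 0 := by
          have h : p*q + p*q^2 - q^2 = 0 := by linear_combination (-q) * hq
          rw [h]; ring
        have hid3A : (1-p) * q^3 * ((a:ℝ)+3) = p * q^2 * ((a:ℝ)+3) := by
          linear_combination q^2 * ((a:ℝ)+3) * hq
        have h3 : p * q * (3*q - 2) ≤ 0 :=
          mul_nonpos_of_nonneg_of_nonpos (by positivity) (by linarith)
        nlinarith [hzq, hid3A, h3]
    · -- d = e + 2 : deep cells
      obtain ⟨u, hu0, hu1, hqe2, hqe3, hqe4⟩ :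
          ∃ u : ℝ, 0 < u ∧ u ≤ 1 ∧ q ^ (e+2) = u * q ∧ q ^ (e+3) = u * q^2 ∧
            q ^ (e+4) = u * q^3 :=
        ⟨q ^ (e+1), pow_pos hq0 _, pow_le_one₀ hq0.le hq1.le,
          by rw [← pow_succ], by rw [← pow_add], by rw [← pow_add]⟩
      obtain ⟨S, hSeq, hS0⟩ : ∃ S : ℝ, ((a + (e+2) : ℕ) : ℝ) + 1 = S ∧ (0:ℝ) ≤ S :=
        ⟨_, rfl, by positivity⟩
      have Pup : Psi p (a+1) (a+(e+2)) = max 0 (u*q*S - 2*q^2) := by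
        rw [Psi_mid p (by omega) (by omega), if_neg (by omega)]
        have h1 : a + (e+2) - (a+1) + 1 = e + 2 := by omega
        rw [h1]
        simp only [← hqdef]
        rw [hqe2]
        rw [hSeq]
      have Pmid : Psi p a (a+(e+2)) = max 0 (u*q^2*S - 2*q^2) := by
        rw [Psi_mid p (by omega) (by omega), if_neg (by omega)]
        have h1 : a + (e+2) - a + 1 = e + 3 := by omega
        rw [h1]
        simp only [← hqdef]
        rw [hqe3]
        rw [hSeq]
      have Pright : Psi p a (a+(e+2)+1) = max 0 (u*q^3*(S+1) - 2*q^2) := by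
        rw [Psi_mid p (by omega) (by omega), if_neg (by omega)]
        have h1 : a + (e+2) + 1 - a + 1 = e + 4 := by omega
        rw [h1]
        simp only [← hqdef]
        rw [hqe4]
        have e2 : ((a + (e+2) + 1 : ℕ) : ℝ) + 1 = S + 1 := by
          rw [← hSeq]; push_cast; ring
        rw [e2]
      rw [Pup, Pmid, Pright]
      have h5 : (1-q)*(1-p) = 1 - 2*p := by rw [hqdef]; field_simp; ring
      clear Pup Pmid Pright hqe2 hqe3 hqe4 hSeq hqdef hP hG hab hp25 haR ha1
      rcases le_or_gt (u*q^2*S) (2*q^2) with hmid | hmid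
      · -- mid ≤ 0
        have hr0 : u*q^3*(S+1) - 2*q^2 ≤ 0 := by
          have h1 : u*q^3*S ≤ 2*q^3 := by nlinarith [hmid, hq0]
          have h2 : u*q^3 ≤ q^3 := by nlinarith [hu1, pow_pos hq0 3]
          nlinarith [sq_nonneg q, hq23, hq0]
        rw [max_eq_left hr0]
        have hup : u*q*S - 2*q^2 ≤ 1 - p := by
          have h1 : (u*q*S) * q ≤ (2*q) * q := by nlinarith [hmid]
          have h2 : u*q*S ≤ 2*q := le_of_mul_le_mul_right (by nlinarith [h1]) hq0
          nlinarith [hF4b]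
        have h3 : p * max 0 (u*q*S - 2*q^2) ≤ p * (1-p) :=
          mul_le_mul_of_nonneg_left (max_le h1p.le hup) hp.le
        have h4 : (0:ℝ) ≤ max 0 (u*q^2*S - 2*q^2) := le_max_left _ _
        nlinarith [h3, h4]
      · -- mid > 0
        have hup0 : (0:ℝ) ≤ u*q*S - 2*q^2 := by
          nlinarith [mul_nonneg (mul_nonneg (mul_nonneg hu0.le hq0.le) hS0)
            (by linarith : (0:ℝ) ≤ 1 - q)]
        have hmu : max 0 (u*q*S - 2*q^2) = u*q*S - 2*q^2 := max_eq_right hup0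
        have hmm : max 0 (u*q^2*S - 2*q^2) = u*q^2*S - 2*q^2 := max_eq_right (by linarith)
        rw [hmu, hmm]
        rcases le_or_gt (u*q^3*(S+1)) (2*q^2) with hr | hr
        · rw [show max 0 (u*q^3*(S+1) - 2*q^2) = 0 from max_eq_left (by linarith)]
          have hqp2 : q - p = p * q := by linear_combination hq
          have h1 : p * (2*q^2) ≤ p * (u*q^2*S) :=
            mul_le_mul_of_nonneg_left hmid.le hp.le
          have h2 : p*(u*q*S) - u*q^2*S = -(p * (u*q^2*S)) := by
            linear_combination (-(u*q*S)) * hqp2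
          have h7 : 2*q^2*(1-2*p) = 2*q^2*(1-q)*(1-p) := by
            linear_combination (2*q^2) * hq
          have h6 : 2*q^2*(1-2*p) ≤ p*(1-p) := by
            rw [h7]; exact mul_le_mul_of_nonneg_right hF4a h1p.le
          nlinarith [h1, h2, h6]
        · rw [show max 0 (u*q^3*(S+1) - 2*q^2) = u*q^3*(S+1) - 2*q^2 from
            max_eq_right (by linarith)]
          have hEq : p*(u*q*S - 2*q^2) + (1-p)*(u*q^3*(S+1) - 2*q^2)
              = (u*q^2*S - 2*q^2) + (1-p)*(u*q^3) := by
            linear_combination (u*S*q*(q-1)) * hq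
          have hid3u : (1-p)*(u*q^3) = p*(u*q^2) := by
            linear_combination u * q^2 * hq
          have huq2 : u*q^2 ≤ 1-p := (mul_le_of_le_one_left (sq_nonneg q) hu1).trans hq2
          nlinarith [hEq, hid3u, mul_le_mul_of_nonneg_left huq2 hp.le]


private lemma gain_le {p : ℝ} (hp : 0 < p) (hP : 2 * p ^ 2 ≤ (1 - p) ^ 3) :
    ∀ k b a, a ≤ b + 1 → gain p k a b ≤ p * k + Psi p a b := by
  have hp2 : p < 1/2 := p_half hp hP
  have hp1 : p ≤ 1 := by linarith
  intro k
  induction k with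
  | zero =>
      intro b a ha
      have h0 : gain p 0 a b = 0 := by rw [gain]
      rw [h0]
      have := Psi_nonneg p hp1 a b
      push_cast
      linarith
  | succ k IHk =>
      intro b
      induction b using Nat.strong_induction_on with
      | _ b IHb =>
          suffices H : ∀ j a, b + 1 - a ≤ j → a ≤ b + 1 →
              gain p (k+1) a b ≤ p * (k+1) + Psi p a b by
            intro a ha
            have := H (b+1-a) a le_rfl ha
            push_cast at this ⊢
            linarith
          intro j
          induction j with
          | zero =>
              intro a hj ha
              have hab : a = b + 1 := by omega
              subst hab
              rw [gain, dif_pos (le_refl (b+1)), Psi_win p (by omega) (by omega)]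
              have h00 := IHk 0 0 (by omega)
              rw [Psi_zero] at h00
              push_cast
              push_cast at h00
              linarith
          | succ j IHj =>
              intro a hj ha
              by_cases hw : b + 1 ≤ a
              · have hab : a = b + 1 := by omega
                subst hab
                rw [gain, dif_pos (le_refl (b+1)), Psi_win p (by omega) (by omega)]
                have h00 := IHk 0 0 (by omega)
                rw [Psi_zero] at h00
                push_cast
                push_cast at h00
                linarith
              · have hab : a ≤ b := by omega
                rw [gain, dif_neg hw]
                apply foldr_max_le
                · have h1 := IHj (a+1) (by omega) (by omega)
                  have h2 := IHk (b+1) a (by omega)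
                  have hkey := key hp hP a b hab
                  push_cast at h1 h2 ⊢
                  nlinarith [mul_le_mul_of_nonneg_left h1 hp.le,
                    mul_le_mul_of_nonneg_left h2 (by linarith : (0:ℝ) ≤ 1 - p), hkey]
                · intro x hx
                  simp only [List.mem_map] at hx
                  obtain ⟨⟨s, hs⟩, _, rfl⟩ := hx
                  have hsb : s < b := List.mem_range.mp hs
                  have h1 := IHb s hsb 0 (by omega)
                  rw [Psi_zero] at h1
                  have h2 := Psi_nonneg p hp1 a b
                  push_cast at h1 ⊢
                  linarith

private lemma gain_ge {p : ℝ} (hp : 0 < p) (hp1 : p ≤ 1) :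
    ∀ k s, p * k ≤ gain p k 0 s := by
  intro k
  induction k with
  | zero =>
      intro s
      have h0 : gain p 0 0 s = 0 := by rw [gain]
      rw [h0]; push_cast; simp
  | succ k IHk =>
      have h00 : p * ((k:ℝ)+1) ≤ gain p (k+1) 0 0 := by
        rw [gain, dif_neg (by omega)]
        simp only [List.range_zero, List.attach_nil, List.map_nil, List.foldr_nil]
        have h1 : gain p (k+1) 1 0 = gain p k 0 0 + 1 := by
          rw [gain, dif_pos (by omega)]; norm_num
        have h2 := IHk 0
        have h3 := IHk 1
        rw [h1]
        nlinarith [mul_le_mul_of_nonneg_left h2 hp.le,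
          mul_le_mul_of_nonneg_left h3 (by linarith : (0:ℝ) ≤ 1 - p)]
      intro s
      match s with
      | 0 => push_cast; exact h00
      | (s+1) =>
          rw [gain, dif_neg (by omega)]
          push_cast
          refine le_trans h00 ?_
          apply le_foldr_max_of_mem
          simp only [List.mem_map]
          exact ⟨⟨0, List.mem_range.mpr (Nat.succ_pos s)⟩, List.mem_attach _ _, rfl⟩

/-- If the strategic miner's relative computational power `p` is positive and
at most `(1/3)·(1 − 8/(1 + 3√57)^{1/3} + (1 + 3√57)^{1/3})` (the unique root in
`(0,1)` of `2p² = (1−p)³`, ≈ 0.361), then his optimal gain per level in the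
immediate-release game equals his fair share: `lim_{k→∞} g_k(0,0)/k = p`.
Consequently FRONTIER is a Nash equilibrium when every miner has relative
computational power at most this threshold. -/
theorem frontier_is_NE_immediate_release (p : ℝ) (hp : 0 < p)
    (hple : p ≤ (1 / 3) * (1 - 8 / (1 + 3 * Real.sqrt 57) ^ ((1 : ℝ) / 3)
        + (1 + 3 * Real.sqrt 57) ^ ((1 : ℝ) / 3))) :
    Filter.Tendsto (fun k : ℕ => gain p k 0 0 / k) Filter.atTop (nhds p) := by
  have hs0 : (0:ℝ) ≤ Real.sqrt 57 := Real.sqrt_nonneg _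
  set s : ℝ := Real.sqrt 57 with hsdef
  have hs : s ^ 2 = 57 := Real.sq_sqrt (by norm_num)
  have hbase : (0:ℝ) < 1 + 3 * s := by linarith
  set t : ℝ := (1 + 3 * s) ^ ((1:ℝ)/3) with htdef
  have ht0 : 0 < t := Real.rpow_pos_of_pos hbase _
  have ht3 : t ^ 3 = 1 + 3 * s := by
    rw [htdef, ← Real.rpow_natCast ((1 + 3*s) ^ ((1:ℝ)/3)) 3, ← Real.rpow_mul hbase.le]
    norm_num
  set r : ℝ := 1 / 3 * (1 - 8 / t + t) with hrdef
  have key6 : 6 * t * (t^2 + t - 8)^2 = (8 + 2*t - t^2)^3 := by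
    linear_combination (t^3 + 3*s - 1) * ht3 + 9 * hs
  have h3t : 3 * t * r = t^2 + t - 8 := by
    rw [hrdef]; field_simp; ring
  have e3 : (27 * t^3) * (2 * r^2) = (27 * t^3) * ((1-r)^3) := by
    linear_combination (6*t*(3*t*r + (t^2 + t - 8)) + (3*t - 3*t*r)^2
      + (3*t - 3*t*r)*(8 + 2*t - t^2) + (8 + 2*t - t^2)^2) * h3t + key6
  have hrr : 2 * r^2 = (1 - r)^3 := mul_left_cancel₀ (by positivity) e3
  have hpr : p ≤ r := hple
  have hr1 : r < 1 := by nlinarith [hrr, hp, hpr]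
  have hP : 2 * p ^ 2 ≤ (1 - p) ^ 3 := by
    nlinarith [hrr, hpr, hp, hr1,
      mul_nonneg (sub_nonneg.2 hpr) (sq_nonneg (1 - p)),
      mul_nonneg (sub_nonneg.2 hpr) (sq_nonneg (1 - r)),
      mul_nonneg (mul_nonneg (sub_nonneg.2 hpr) (by linarith : (0:ℝ) ≤ 1 - p))
        (by linarith : (0:ℝ) ≤ 1 - r),
      mul_nonneg (sub_nonneg.2 hpr) hp.le,
      mul_nonneg (sub_nonneg.2 hpr) (hp.le.trans hpr)]
  have hp1 : p ≤ 1 := by nlinarith [p_half hp hP]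
  have heq : ∀ k : ℕ, gain p k 0 0 = p * k := by
    intro k
    refine le_antisymm ?_ (gain_ge hp hp1 k 0)
    have h1 := gain_le hp hP k 0 0 (by omega)
    rw [Psi_zero] at h1
    linarith
  have hev : (fun k : ℕ => gain p k 0 0 / k) =ᶠ[Filter.atTop] (fun _ => p) := by
    filter_upwards [Filter.eventually_ge_atTop 1] with k hk
    have hk0 : (k:ℝ) ≠ 0 := Nat.cast_ne_zero.mpr (by omega)
    rw [heq k, mul_div_assoc, div_self hk0, mul_one]
  exact Filter.Tendsto.congr' hev.symm tendsto_const_nhds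
end

section
/- Fix a real number p with 0 < p ≤ r, where r is the root in (0,1/2) of p³ − 6p² + 5p − 1 = 0 (approximately 0.308). Let G : ℕ → ℕ × ℕ → ℝ be any function satisfying: (i) G_0(a,b) = 0 for all (a,b); (ii) G_k(a,b) ≤ k + b for all k, a, b; and (iii) for all k ≥ 1 and all (a,b), G_k(a,b) ≤ max( max_{0 ≤ s < b} G_k(0,s), p·G_k(a+1,b) + (1−p)·G_{k−1}(a,b+1), [G_{k−1}(a−b−1,0) + b + 1 if a ≥ b+1] ), where the maximum over s is omitted when b = 0 and the last option is omitted when a < b+1. Then G_k(0,0) ≤ k·p for all k. (Consequently, in the strategic-release game, where G_k(a,b) is the strategic miner's optimal expected gain over k levels from the state with branches of lengths a and b, FRONTIER is a Nash equilibrium when every miner has relative computational power at most r.) -/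
private lemma foldrMaxLe (x : ℝ) : ∀ (l : List ℝ) (c : ℝ), c ≤ x → (∀ y ∈ l, y ≤ x) →
    l.foldr max c ≤ x := by
  intro l
  induction l with
  | nil => intro c hc _; simpa using hc
  | cons y l ihl =>
    intro c hc h
    simp only [List.foldr_cons]
    exact max_le (h y (by simp)) (ihl c hc fun z hz => h z (by simp [hz]))

private noncomputable def phiSR (p lam alp : ℝ) (a b : ℕ) : ℝ :=
  if b + 1 ≤ a then alp * a + (1 - alp) * b + 1 - p - alp else a * lam ^ (b + 1 - a)

private lemma phiSR_zero_left (p lam alp : ℝ) (b : ℕ) : phiSR p lam alp 0 b = 0 := by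
  simp [phiSR]

private lemma phiSR_nonneg (p lam alp : ℝ) (hp1 : p ≤ 1) (hl0 : 0 ≤ lam)
    (_ha1 : 1 - p ≤ alp) (ha0 : 0 ≤ alp) (a b : ℕ) : 0 ≤ phiSR p lam alp a b := by
  unfold phiSR
  split_ifs with h
  · have hab : (b : ℝ) + 1 ≤ (a : ℝ) := by exact_mod_cast h
    have hb0 : (0:ℝ) ≤ b := Nat.cast_nonneg b
    nlinarith [mul_nonneg ha0 (by linarith : (0:ℝ) ≤ (a:ℝ) - (b:ℝ) - 1)]
  · exact mul_nonneg (Nat.cast_nonneg a) (pow_nonneg hl0 _)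

private lemma phiSR_release (p lam alp : ℝ) (ha1 : 1 - p ≤ alp)
    (a b : ℕ) (hba : b + 1 ≤ a) :
    phiSR p lam alp (a - b - 1) 0 + ((b : ℝ) + 1) - p ≤ phiSR p lam alp a b := by
  obtain ⟨m, rfl⟩ : ∃ m, a = b + 1 + m := ⟨a - b - 1, by omega⟩
  have hm : b + 1 + m - b - 1 = m := by omega
  rw [hm]
  unfold phiSR
  rcases Nat.eq_zero_or_pos m with rfl | hm1
  · have h1 : ¬ ((0:ℕ) + 1 ≤ 0) := by omega
    have h2 : b + 1 ≤ b + 1 + 0 := by omega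
    rw [if_neg h1, if_pos h2]
    push_cast
    ring_nf
    nlinarith [sq_nonneg lam]
  · have h1 : (0:ℕ) + 1 ≤ m := hm1
    have h2 : b + 1 ≤ b + 1 + m := by omega
    rw [if_pos h1, if_pos h2]
    push_cast
    nlinarith [Nat.cast_nonneg (α := ℝ) b]

private lemma phiSR_mine (p lam alp : ℝ) (hp0 : 0 < p) (hp2 : 0 ≤ 1 - 2*p)
    (hlam : (1 - p) * lam = p) (hl0 : 0 ≤ lam) (hl1 : lam ≤ 1 - p)
    (hamine : p * alp + (1 - p) * (1 - alp) ≤ p * (1 - p))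
    (hpalp : p * alp ≤ 1 - 2*p)
    (a b : ℕ) :
    p * phiSR p lam alp (a + 1) b + (1 - p) * phiSR p lam alp a (b + 1) ≤
      phiSR p lam alp a b + p * (1 - p) := by
  have hb0 : (0:ℝ) ≤ b := Nat.cast_nonneg b
  have ha0 : (0:ℝ) ≤ a := Nat.cast_nonneg a
  have h1p : (0:ℝ) < 1 - p := by nlinarith
  unfold phiSR
  rcases le_or_gt (b + 1) a with hA | hB
  · -- region A : b + 1 ≤ a
    have hA1 : b + 1 ≤ a + 1 := by omega
    rw [if_pos hA, if_pos hA1]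
    rcases le_or_gt (b + 2) a with hA2 | hA2
    · -- deep region A
      rw [if_pos (by omega : b + 1 + 1 ≤ a)]
      push_cast
      nlinarith
    · -- a = b + 1
      have haeq : a = b + 1 := by omega
      subst haeq
      rw [if_neg (by omega : ¬ (b + 1 + 1 ≤ b + 1))]
      have hexp : b + 1 + 1 - (b + 1) = 1 := by omega
      rw [hexp, pow_one]
      push_cast
      nlinarith [mul_nonneg hp2 hb0]
  · -- band : a ≤ b
    have hab : a ≤ b := by omega
    rw [if_neg (by omega : ¬ (b + 1 + 1 ≤ a)), if_neg (by omega : ¬ (b + 1 ≤ a))]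
    have he2 : b + 1 + 1 - a = (b - a) + 2 := by omega
    have he1 : b + 1 - a = (b - a) + 1 := by omega
    rw [he2, he1]
    rcases Nat.lt_or_ge a b with hlt | hge
    · -- a < b : neighbour (a+1, b) still in band
      rw [if_neg (by omega : ¬ (b + 1 ≤ a + 1))]
      obtain ⟨e, he⟩ : ∃ e, b - a = e + 1 := ⟨b - a - 1, by omega⟩
      have he3 : b + 1 - (a + 1) = e + 1 := by omega
      rw [he, he3]
      set L := lam ^ e with hL
      have hL0 : 0 ≤ L := pow_nonneg hl0 e
      have hL1 : L ≤ 1 := pow_le_one₀ hl0 (by nlinarith)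
      have p1 : lam ^ (e + 1) = L * lam := by rw [hL, pow_succ]
      have p2 : lam ^ (e + 1 + 1) = L * lam * lam := by
        rw [hL, pow_succ, pow_succ]
      have p3 : lam ^ (e + 1 + 2) = L * lam * lam * lam := by
        rw [hL, pow_succ, pow_succ, pow_succ]
      rw [p1, p2, p3]
      push_cast
      nlinarith [mul_nonneg (mul_nonneg ha0 hL0) hl0,
        mul_nonneg (mul_nonneg (mul_nonneg ha0 hL0) hl0) hl0,
        mul_nonneg hL0 hl0,
        mul_le_mul_of_nonneg_right hL1 (mul_nonneg hp0.le hl0)]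
    · -- a = b : neighbour (a+1, b) in region A
      have haeq : a = b := by omega
      subst haeq
      rw [if_pos (by omega : a + 1 ≤ a + 1)]
      have hz : a - a = 0 := by omega
      rw [hz]
      push_cast
      nlinarith [mul_nonneg ha0 hl0]

/-- Let `r` be the root in `(0, 1/2)` of `p³ − 6p² + 5p − 1 = 0` (≈ 0.308) and
let `0 < p ≤ r`. Let `G k (a, b)` be any function satisfying:
(i) `G 0 (a,b) = 0`;
(ii) `G k (a,b) ≤ k + b`;
(iii) for `k ≥ 1`, `G k (a,b)` is at most the maximum of: the best capitulation
value `G k (0,s)` over `0 ≤ s < b` (omitted when `b = 0`); the mining value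
`p·G k (a+1,b) + (1−p)·G (k−1) (a,b+1)`; and, when `a ≥ b+1`, the release value
`G (k−1) (a−b−1, 0) + b + 1`.
Then `G k (0,0) ≤ k·p` for all `k`.  Consequently, in the strategic-release
game, where `G` is the strategic miner's optimal expected gain, FRONTIER is a
Nash equilibrium when every miner has relative computational power at most `r`. -/
theorem frontier_is_NE_strategic_release (p r : ℝ)
    (hr0 : 0 < r) (hr2 : r < 1 / 2)
    (hroot : r ^ 3 - 6 * r ^ 2 + 5 * r - 1 = 0)
    (hp0 : 0 < p) (hpr : p ≤ r)
    (G : ℕ → ℕ × ℕ → ℝ)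
    (hG0 : ∀ a b : ℕ, G 0 (a, b) = 0)
    (hGbound : ∀ (k a b : ℕ), G k (a, b) ≤ k + b)
    (hGrec_low : ∀ (k a b : ℕ), a < b + 1 →
      G (k + 1) (a, b) ≤
        ((List.range b).map (fun s => G (k + 1) (0, s))).foldr max
          (p * G (k + 1) (a + 1, b) + (1 - p) * G k (a, b + 1)))
    (hGrec_high : ∀ (k a b : ℕ), b + 1 ≤ a →
      G (k + 1) (a, b) ≤
        ((List.range b).map (fun s => G (k + 1) (0, s))).foldr max
          (max (p * G (k + 1) (a + 1, b) + (1 - p) * G k (a, b + 1))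
            (G k (a - b - 1, 0) + (b + 1)))) :
    ∀ k : ℕ, G k (0, 0) ≤ k * p := by
  -- Step 1: numeric facts about p
  have hr3 : r < 1 / 3 := by
    by_contra h
    push_neg at h
    nlinarith [mul_nonneg (mul_nonneg (by linarith : (0:ℝ) ≤ r - 1/3)
      (by linarith : (0:ℝ) ≤ 1/2 - r)) (by linarith : (0:ℝ) ≤ 31/6 - r)]
  have hp3 : p < 1 / 3 := lt_of_le_of_lt hpr hr3
  have hcub : p ^ 3 - 6 * p ^ 2 + 5 * p - 1 ≤ 0 := by
    nlinarith [mul_nonneg (by linarith : (0:ℝ) ≤ r - p)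
      (by nlinarith [sq_nonneg p, sq_nonneg r, mul_pos hp0 hr0] :
        (0:ℝ) ≤ p^2 + p*r + r^2 - 6*p - 6*r + 5)]
  have h1p : (0:ℝ) < 1 - p := by linarith
  have h2p : (0:ℝ) < 1 - 2*p := by linarith
  set lam : ℝ := p / (1 - p) with hlamdef
  set alp : ℝ := (1 - p)^2 / (1 - 2*p) with halpdef
  have hlam : (1 - p) * lam = p := by
    rw [hlamdef]; field_simp
  have hl0 : 0 ≤ lam := div_nonneg hp0.le h1p.le
  have hl1 : lam ≤ 1 - p := by
    rw [hlamdef, div_le_iff₀ h1p]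
    nlinarith
  have halp : (1 - 2*p) * alp = (1 - p)^2 := by
    rw [halpdef]; field_simp
  have ha1 : 1 - p ≤ alp := by nlinarith
  have ha0 : 0 ≤ alp := by linarith
  have hamine : p * alp + (1 - p) * (1 - alp) ≤ p * (1 - p) := by nlinarith
  have hpalp : p * alp ≤ 1 - 2*p := by nlinarith
  -- abbreviation
  set Φ : ℕ → ℕ → ℝ := phiSR p lam alp with hΦ
  have Φ0 : ∀ b, Φ 0 b = 0 := fun b => phiSR_zero_left p lam alp b
  have Φnn : ∀ a b, 0 ≤ Φ a b := fun a b =>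
    phiSR_nonneg p lam alp (by linarith) hl0 ha1 ha0 a b
  have Φmine : ∀ a b, p * Φ (a+1) b + (1 - p) * Φ a (b+1) ≤ Φ a b + p * (1 - p) :=
    fun a b => phiSR_mine p lam alp hp0 h2p.le hlam hl0 hl1 hamine hpalp a b
  have Φrel : ∀ a b, b + 1 ≤ a → Φ (a - b - 1) 0 + ((b:ℝ) + 1) - p ≤ Φ a b :=
    fun a b h => phiSR_release p lam alp ha1 a b h
  -- Step 2 : main induction
  have main : ∀ k a b, G k (a, b) ≤ k * p + Φ a b := by
    intro k
    induction k with
    | zero =>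
      intro a b
      rw [hG0 a b]
      push_cast
      have := Φnn a b
      linarith
    | succ k ih =>
      -- key step at fixed b, given all smaller b
      have key : ∀ b, (∀ s, s < b → ∀ a, G (k+1) (a, s) ≤ (k+1 : ℕ) * p + Φ a s) →
          ∀ a, G (k+1) (a, b) ≤ (k+1 : ℕ) * p + Φ a b := by
        intro b hb a
        have hKnn : (0:ℝ) ≤ (k:ℝ) + 1 + b := by positivity
        have iter : ∀ n a, G (k+1) (a, b) ≤ (k+1 : ℕ) * p + Φ a b + p^n * ((k:ℝ) + 1 + b) := by
          intro n
          induction n with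
          | zero =>
            intro a
            have h1 := hGbound (k+1) a b
            have h2 := Φnn a b
            have h3 : (0:ℝ) ≤ ((k:ℕ)+1 : ℕ) * p := by positivity
            push_cast at h1 ⊢
            nlinarith
          | succ n ihn =>
            intro a
            have hcap : ∀ y ∈ (List.range b).map (fun s => G (k + 1) (0, s)),
                y ≤ (k+1 : ℕ) * p + Φ a b + p^(n+1) * ((k:ℝ) + 1 + b) := by
              intro y hy
              simp only [List.mem_map, List.mem_range] at hy
              obtain ⟨s, hs, rfl⟩ := hy
              have h1 := hb s hs 0
              rw [Φ0 s] at h1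
              have h2 := Φnn a b
              have h3 : 0 ≤ p^(n+1) * ((k:ℝ) + 1 + b) :=
                mul_nonneg (pow_nonneg hp0.le _) hKnn
              linarith
            have hmine : p * G (k + 1) (a + 1, b) + (1 - p) * G k (a, b + 1) ≤
                (k+1 : ℕ) * p + Φ a b + p^(n+1) * ((k:ℝ) + 1 + b) := by
              have h1 := ihn (a+1)
              have h2 := ih a (b+1)
              have h3 := Φmine a b
              have h4 := mul_le_mul_of_nonneg_left h1 hp0.le
              have h5 := mul_le_mul_of_nonneg_left h2 h1p.le
              push_cast at h4 h5 ⊢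
              have h7 : p * (((k:ℝ)+1)*p + Φ (a+1) b + p^n*((k:ℝ)+1+(b:ℝ)))
                  + (1-p)*((k:ℝ)*p + Φ a (b+1))
                  = (k:ℝ)*p + p^2 + p*Φ (a+1) b + (1-p)*Φ a (b+1)
                    + p^(n+1)*((k:ℝ)+1+(b:ℝ)) := by ring
              linarith
            rcases lt_or_ge a (b+1) with hlow | hhigh
            · refine (hGrec_low k a b hlow).trans (foldrMaxLe _ _ _ hmine hcap)
            · refine (hGrec_high k a b hhigh).trans (foldrMaxLe _ _ _ ?_ hcap)
              refine max_le hmine ?_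
              -- release branch
              have h1 := ih (a - b - 1) 0
              have h2 := Φrel a b hhigh
              have h3 : 0 ≤ p^(n+1) * ((k:ℝ) + 1 + b) :=
                mul_nonneg (pow_nonneg hp0.le _) hKnn
              push_cast at h1 ⊢
              linarith
        -- pass to the limit n → ∞
        have htend : Filter.Tendsto
            (fun n : ℕ => (k+1 : ℕ) * p + Φ a b + p^n * ((k:ℝ) + 1 + b))
            Filter.atTop (nhds ((k+1 : ℕ) * p + Φ a b + 0 * ((k:ℝ) + 1 + b))) := by
          apply Filter.Tendsto.const_add
          apply Filter.Tendsto.mul_const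
          exact tendsto_pow_atTop_nhds_zero_of_lt_one hp0.le (by linarith)
        have := ge_of_tendsto' htend (fun n => iter n a)
        simpa using this
      -- strong induction on b
      suffices H : ∀ b a, G (k+1) (a, b) ≤ (k+1 : ℕ) * p + Φ a b by
        intro a b; exact H b a
      intro b
      induction b using Nat.strong_induction_on with
      | _ b ihb => exact key b (fun s hs a' => ihb s hs a')
  intro k
  have h := main k 0 0
  rw [Φ0 0] at h
  linarith
end

section
/- Fix a real number p with 0 < p < 1. For every k ∈ ℕ and every state (a,b) with a + 1 ≤ b + 1 (i.e., a < b + 1), the optimal gain of the strategic miner in the immediate-release game is nondecreasing in the length of his own branch: g_k(a+1, b) ≥ g_k(a, b). -/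
/-!
Write `g_k` for `gain p k`. By induction on `k` we prove two facts at once: `g_k` is monotone in
the miner's branch, `g_k(a,b) ≤ g_k(a+1,b)`, and one extra block on both branches is worth at most
one, `g_k(a+1,b+1) ≤ g_k(a,b) + 1`. Walking down the diagonal with the second fact and then along
the honest branch with both gives `g_k(a,b) ≤ g_k(0,0) + b`. At level `k+1` this bounds the honest
continuation `g_k(a,b+1)` by `g_k(0,0) + b + 1`, which is the value of the winning state `(b+1,b)`;
so no state of column `b` is worth more than winning it, which is monotonicity on the diagonal
`a = b`. Elsewhere both facts propagate termwise through the recursion, the continuation being a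
convex combination and the capitulation options being shared, except for the option `(0,b)` on the
left of the second fact, which by both facts is worth at most one more than the option `(0,b-1)`.
-/

theorem List.foldr_max_le_iff {α : Type*} [LinearOrder α] {l : List α} {b c : α} :
    l.foldr max b ≤ c ↔ (∀ x ∈ l, x ≤ c) ∧ b ≤ c := by
  induction l with
  | nil => simp
  | cons y t ih => simp [ih, and_assoc]

section Unfolding

variable {p : ℝ} {k a b : ℕ}

theorem gain_zero_left (p : ℝ) (a b : ℕ) : gain p 0 a b = 0 := by
  rw [gain]

theorem gain_succ_of_lt (h : b < a) : gain p (k + 1) a b = gain p k 0 0 + (b + 1) := by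
  rw [gain, dif_pos (show b + 1 ≤ a from h)]
  push_cast
  rfl

theorem gain_succ_le_iff (h : a ≤ b) {c : ℝ} :
    gain p (k + 1) a b ≤ c ↔ (∀ s < b, gain p (k + 1) 0 s ≤ c) ∧
      p * gain p (k + 1) (a + 1) b + (1 - p) * gain p k a (b + 1) ≤ c := by
  rw [gain, dif_neg (by omega), List.foldr_max_le_iff]
  simp

theorem gain_succ_zero_le (h : a ≤ b) {s : ℕ} (hs : s < b) :
    gain p (k + 1) 0 s ≤ gain p (k + 1) a b :=
  ((gain_succ_le_iff h).1 le_rfl).1 s hs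

theorem continuation_le_gain_succ (h : a ≤ b) :
    p * gain p (k + 1) (a + 1) b + (1 - p) * gain p k a (b + 1) ≤ gain p (k + 1) a b :=
  ((gain_succ_le_iff h).1 le_rfl).2

end Unfolding

def OwnBranchMonotone (p : ℝ) (k : ℕ) : Prop :=
  ∀ a b, a ≤ b → gain p k a b ≤ gain p k (a + 1) b

def DiagonalStepLeOne (p : ℝ) (k : ℕ) : Prop :=
  ∀ a b, a ≤ b + 1 → gain p k (a + 1) (b + 1) ≤ gain p k a b + 1

section Induction

variable {p : ℝ} {k : ℕ}

theorem gain_le_gain_zero_zero_add (hmono : OwnBranchMonotone p k)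
    (hdiag : DiagonalStepLeOne p k) {a b : ℕ} (h : a ≤ b) :
    gain p k a b ≤ gain p k 0 0 + b := by
  induction a generalizing b with
  | zero =>
    induction b with
    | zero => simp
    | succ b ih =>
      calc gain p k 0 (b + 1) ≤ gain p k 1 (b + 1) := hmono 0 (b + 1) (by omega)
        _ ≤ gain p k 0 b + 1 := hdiag 0 b (by omega)
        _ ≤ gain p k 0 0 + (b + 1 : ℕ) := by push_cast; linarith [ih (Nat.zero_le b)]
  | succ a ih =>
    obtain ⟨b, rfl⟩ : ∃ b', b = b' + 1 := ⟨b - 1, by omega⟩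
    calc gain p k (a + 1) (b + 1) ≤ gain p k a b + 1 := hdiag a b (by omega)
      _ ≤ gain p k 0 0 + (b + 1 : ℕ) := by push_cast; linarith [ih (b := b) (by omega)]

variable (hp0 : 0 ≤ p) (hp1 : p ≤ 1)
include hp0 hp1

theorem gain_succ_le_win (hmono : OwnBranchMonotone p k) (hdiag : DiagonalStepLeOne p k)
    {a b : ℕ} (h : a ≤ b + 1) : gain p (k + 1) a b ≤ gain p k 0 0 + (b + 1) := by
  rcases h.eq_or_lt with rfl | h
  · exact (gain_succ_of_lt (Nat.lt_succ_self b)).le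
  rw [gain_succ_le_iff (by omega)]
  refine ⟨fun s hs => ?_, ?_⟩
  · have hopt := gain_succ_le_win hmono hdiag (a := 0) (b := s) (by omega)
    have hsb : (s : ℝ) + 1 ≤ b := by exact_mod_cast hs
    linarith
  · have hmine := gain_succ_le_win hmono hdiag (a := a + 1) (b := b) (by omega)
    have hhonest := gain_le_gain_zero_zero_add hmono hdiag (b := b + 1) (by omega : a ≤ b + 1)
    push_cast at hhonest
    nlinarith
termination_by (b, b + 1 - a)

theorem gain_succ_mono_own_branch (hmono : OwnBranchMonotone p k)
    (hdiag : DiagonalStepLeOne p k) {a b : ℕ} (h : a ≤ b) :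
    gain p (k + 1) a b ≤ gain p (k + 1) (a + 1) b := by
  rcases h.eq_or_lt with rfl | h
  · rw [gain_succ_of_lt a.lt_succ_self]
    exact gain_succ_le_win hp0 hp1 hmono hdiag a.le_succ
  rw [gain_succ_le_iff h.le]
  refine ⟨fun s hs => gain_succ_zero_le h hs, ?_⟩
  have hmine := gain_succ_mono_own_branch hmono hdiag h
  have hhonest := hmono a (b + 1) (by omega)
  have hcont := continuation_le_gain_succ (p := p) (k := k) h
  nlinarith
termination_by b - a

theorem gain_succ_succ_le_add_one (hdiag : DiagonalStepLeOne p k)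
    (hmono : OwnBranchMonotone p (k + 1)) {a b : ℕ} (h : a ≤ b + 1) :
    gain p (k + 1) (a + 1) (b + 1) ≤ gain p (k + 1) a b + 1 := by
  rcases h.eq_or_lt with rfl | h
  · rw [gain_succ_of_lt (by omega), gain_succ_of_lt (by omega)]
    push_cast
    linarith
  rw [gain_succ_le_iff (by omega)]
  refine ⟨fun s hs => ?_, ?_⟩
  · rcases (Nat.lt_succ_iff.1 hs).lt_or_eq with hs | rfl
    · linarith [gain_succ_zero_le (p := p) (k := k) (show a ≤ b by omega) hs]
    cases s with
    | zero =>
      obtain rfl : a = 0 := by omega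
      linarith
    | succ s =>
      calc gain p (k + 1) 0 (s + 1) ≤ gain p (k + 1) 1 (s + 1) := hmono 0 (s + 1) (by omega)
        _ ≤ gain p (k + 1) 0 s + 1 := gain_succ_succ_le_add_one hdiag hmono (by omega)
        _ ≤ gain p (k + 1) a (s + 1) + 1 := by
          linarith [gain_succ_zero_le (p := p) (k := k) (show a ≤ s + 1 by omega) s.lt_succ_self]
  · have hmine := gain_succ_succ_le_add_one hdiag hmono (a := a + 1) (b := b) (by omega)
    have hhonest := hdiag a (b + 1) (by omega)
    have hcont := continuation_le_gain_succ (p := p) (k := k) (show a ≤ b by omega)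
    nlinarith
termination_by (b, b + 1 - a)

theorem ownBranchMonotone_and_diagonalStepLeOne :
    ∀ k, OwnBranchMonotone p k ∧ DiagonalStepLeOne p k
  | 0 => ⟨fun a b _ => by simp [gain_zero_left], fun a b _ => by simp [gain_zero_left]⟩
  | k + 1 =>
    have ⟨hmono, hdiag⟩ := ownBranchMonotone_and_diagonalStepLeOne k
    have hmono' : OwnBranchMonotone p (k + 1) := fun _ _ h =>
      gain_succ_mono_own_branch hp0 hp1 hmono hdiag h
    ⟨hmono', fun _ _ h => gain_succ_succ_le_add_one hp0 hp1 hdiag hmono' h⟩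

end Induction

/-- The strategic miner's optimal gain in the immediate-release game is
nondecreasing in the length of his own branch: for every `k` and every state
`(a, b)` with `a + 1 ≤ b + 1`, we have `g_k(a+1, b) ≥ g_k(a, b)`. -/
theorem gain_mono_in_own_branch (p : ℝ) (hp0 : 0 < p) (hp1 : p < 1) :
    ∀ (k a b : ℕ), a < b + 1 → gain p k a b ≤ gain p k (a + 1) b := fun k a b h =>
  (ownBranchMonotone_and_diagonalStepLeOne hp0.le hp1.le k).1 a b (Nat.lt_succ_iff.1 h)
end

section
/- Fix a real number p with 0 < p < 1/2 and let (φ, ĝ) be a potential for the immediate-release game. Then φ(0,1) = (ĝ − p)/(1 − p). In particular, ĝ = p if and only if φ(0,1) = φ(0,0) = 0, i.e., FRONTIER is a best response for the strategic miner if and only if φ(0,1) = φ(0,0). -/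
/-- A potential for the immediate-release bitcoin mining game, for a strategic
miner of relative computational power `p` playing against honest FRONTIER
miners of collective power `1 − p`.  It consists of a potential function
`φ a b` (the miner's advantage for being at the state where his branch has
length `a` and the honest branch has length `b`; meaningful for `a ≤ b + 1`)
and the optimal expected gain per level `gain`, satisfying: `φ 0 0 = 0`;
`φ ≥ 0` on states; `gain ≥ p`; the winning-state equation
`φ (b+1) b = φ 0 0 + (b+1) − gain`; the Bellman equation for `a ≤ b`,
`φ a b = max (max_{0 ≤ s < b} φ 0 s)
             (p·φ (a+1) b + (1−p)·φ a (b+1) − (1−p)·gain)`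
(where the maximum over `s` is omitted when `b = 0`); monotonicity of `φ a b`
in `a`; and the shift bound
`φ (a+c) (b+c) ≤ φ a b + c·(p/(1−p))^(1+b−a)`. -/
structure MiningPotential (p : ℝ) where
  φ : ℕ → ℕ → ℝ
  gain : ℝ
  zero : φ 0 0 = 0
  nonneg : ∀ a b : ℕ, a ≤ b + 1 → 0 ≤ φ a b
  gain_ge : p ≤ gain
  win : ∀ b : ℕ, φ (b + 1) b = φ 0 0 + (b + 1) - gain
  bellman : ∀ a b : ℕ, a ≤ b →
    φ a b = ((List.range b).map (fun s => φ 0 s)).foldr max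
      (p * φ (a + 1) b + (1 - p) * φ a (b + 1) - (1 - p) * gain)
  mono : ∀ a b : ℕ, a ≤ b → φ a b ≤ φ (a + 1) b
  shift : ∀ a b c : ℕ, a ≤ b + 1 →
    φ (a + c) (b + c) ≤ φ a b + (c : ℝ) * (p / (1 - p)) ^ (1 + b - a)

/-- A state `(a, b)` with `a ≤ b` is a mining state of the potential `P` if at
`(a, b)` the Bellman maximum is attained by continuing to mine. -/
def MiningPotential.IsMiningState {p : ℝ} (P : MiningPotential p) (a b : ℕ) : Prop :=
  a ≤ b ∧
    P.φ a b = p * P.φ (a + 1) b + (1 - p) * P.φ a (b + 1) - (1 - p) * P.gain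

/-- For any potential `(φ, ĝ)` of the immediate-release game with `0 < p < 1/2`:
`φ(0,1) = (ĝ − p)/(1 − p)`; in particular `ĝ = p` (FRONTIER is a best response)
if and only if `φ(0,1) = φ(0,0)`. -/
theorem potential_zero_one_eq {p : ℝ} (hp0 : 0 < p) (hp : p < 1 / 2)
    (P : MiningPotential p) :
    P.φ 0 1 = (P.gain - p) / (1 - p) ∧
    (P.gain = p ↔ P.φ 0 1 = P.φ 0 0) := by
  have hb := P.bellman 0 0 le_rfl
  have hw := P.win 0
  have hz := P.zero
  simp [List.range_zero, hz] at hb hw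
  have hp1 : (1 : ℝ) - p ≠ 0 := by linarith
  have h1 : P.φ 0 1 = (P.gain - p) / (1 - p) := by
    field_simp
    nlinarith [hb, hw]
  refine ⟨h1, ?_⟩
  rw [h1, hz]
  constructor
  · intro h; rw [h]; simp
  · intro h
    have := div_eq_zero_iff.mp h
    rcases this with h2 | h2
    · linarith
    · linarith
end

section
/- Fix a real number p with 0 < p < 1/2 and let (φ, ĝ) be a potential for the immediate-release game. Then φ(1,2) ≤ (2p² − p)/(1−p)² + ĝ/(1−p). -/
/-- For any potential `(φ, ĝ)` of the immediate-release game with `0 < p < 1/2`: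
`φ(1,2) ≤ (2p² − p)/(1−p)² + ĝ/(1−p)`. -/
theorem potential_one_two_bound {p : ℝ} (hp0 : 0 < p) (hp : p < 1 / 2)
    (P : MiningPotential p) :
    P.φ 1 2 ≤ (2 * p ^ 2 - p) / (1 - p) ^ 2 + P.gain / (1 - p) := by
  have h1p : (0:ℝ) < 1 - p := by linarith
  have hbell := P.bellman 0 0 le_rfl
  have hwin := P.win 0
  simp [P.zero] at hbell hwin
  -- hbell : 0 = p * P.φ 1 0 + (1 - p) * P.φ 0 1 - (1 - p) * P.gain
  have hφ01 : P.φ 0 1 = (P.gain - p) / (1 - p) := by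
    rw [hwin] at hbell
    field_simp
    linarith
  have hs := P.shift 0 1 1 (by norm_num)
  norm_num at hs
  rw [hφ01] at hs
  have heq : (P.gain - p) / (1 - p) + (p / (1 - p)) ^ 2
      = (2 * p ^ 2 - p) / (1 - p) ^ 2 + P.gain / (1 - p) := by
    field_simp
    ring
  linarith
end

section
/- Fix a real number p with 0 < p < (3−√5)/2 (≈ 0.382) and let (φ, ĝ) be a potential for the immediate-release game. If (0,2) is a mining state of φ, then φ(0,2) ≤ (2p² − (1−p)³)/(1−p)². -/
set_option maxHeartbeats 1000000 in
/-- For any potential `(φ, ĝ)` of the immediate-release game with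
`0 < p < (3−√5)/2` (≈ 0.382): if `(0,2)` is a mining state of `φ`, then
`φ(0,2) ≤ (2p² − (1−p)³)/(1−p)²`. -/
theorem potential_zero_two_bound {p : ℝ} (hp0 : 0 < p)
    (hp : p < (3 - Real.sqrt 5) / 2)
    (P : MiningPotential p) (hmine : P.IsMiningState 0 2) :
    P.φ 0 2 ≤ (2 * p ^ 2 - (1 - p) ^ 3) / (1 - p) ^ 2 := by
  have hs5 : Real.sqrt 5 ^ 2 = 5 := Real.sq_sqrt (by norm_num)
  have hs5n : 0 ≤ Real.sqrt 5 := Real.sqrt_nonneg 5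
  -- p < 1/2 and the key polynomial inequality p^2 - 3p + 1 > 0
  have h2lt : (2:ℝ) < Real.sqrt 5 := by nlinarith
  have hp1 : p < 1/2 := by linarith
  have hu : (0:ℝ) < 1 - p := by linarith
  have hu2 : (0:ℝ) < (1 - p)^2 := by positivity
  have hD : 0 < p^2 - 3*p + 1 := by nlinarith
  set g := P.gain with hg_def
  set v := P.φ 0 1 with hv_def
  set x := P.φ 0 2 with hx_def
  set y := P.φ 1 2 with hy_def
  set z := P.φ 0 3 with hz_def
  have F5 : p ≤ g := P.gain_ge
  -- winning state (1,0)
  have hw : P.φ 1 0 = 1 - g := by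
    have h := P.win 0
    rw [P.zero] at h
    norm_num at h
    exact h
  -- Bellman at (0,0): pins down v
  have F4 : (1 - p) * v = g - p := by
    have h := P.bellman 0 0 le_rfl
    simp only [List.range_zero, List.map_nil, List.foldr_nil] at h
    rw [P.zero, hw] at h
    rw [hv_def]
    linarith [h]
  -- mining equality at (0,2)
  have F1 : x = p * y + (1 - p) * z - (1 - p) * g := hmine.2
  -- shift bound on y
  have F2 : y ≤ v + (p / (1 - p)) ^ 2 := by
    have h := P.shift 0 1 1 (by norm_num)
    norm_num at h
    exact h
  -- mono + shift bound on z
  have F3 : z ≤ x + (p / (1 - p)) ^ 3 := by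
    have h1 := P.mono 0 3 (by norm_num)
    have h2 := P.shift 0 2 1 (by norm_num)
    norm_num at h1 h2
    linarith
  -- clear denominators
  have hq2 : (p / (1 - p)) ^ 2 * (1 - p) ^ 2 = p ^ 2 := by
    field_simp
  have hq3 : (p / (1 - p)) ^ 3 * (1 - p) ^ 3 = p ^ 3 := by
    field_simp
  have F2' : y * (1 - p)^2 ≤ v * (1 - p)^2 + p^2 := by
    have h := mul_le_mul_of_nonneg_right F2 hu2.le
    have he : (v + (p / (1 - p)) ^ 2) * (1 - p)^2 = v * (1 - p)^2 + p^2 := by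
      rw [add_mul, hq2]
    linarith [h, he.le, he.ge]
  have F3' : z * (1 - p)^3 ≤ x * (1 - p)^3 + p^3 := by
    have hu3 : (0:ℝ) < (1 - p)^3 := by positivity
    have h := mul_le_mul_of_nonneg_right F3 hu3.le
    have he : (x + (p / (1 - p)) ^ 3) * (1 - p)^3 = x * (1 - p)^3 + p^3 := by
      rw [add_mul, hq3]
    linarith [h, he.le, he.ge]
  -- multiplied versions
  have F1' : x * (1-p)^3 = p * (y * (1-p)^2) * (1-p) + (1-p) * (z * (1-p)^3) - (1-p)^4 * g := by
    rw [F1]; ring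
  have F2'' : p * (1-p) * (y * (1-p)^2) ≤ p * (1-p) * (v * (1-p)^2 + p^2) :=
    mul_le_mul_of_nonneg_left F2' (by positivity)
  have F3'' : (1-p) * (z * (1-p)^3) ≤ (1-p) * (x * (1-p)^3 + p^3) :=
    mul_le_mul_of_nonneg_left F3' hu.le
  have F4' : p * (1-p)^2 * ((1-p) * v) = p * (1-p)^2 * (g - p) := by rw [F4]
  have F5' : 0 ≤ (g - p) * ((1-p)^2 * (p^2 - 3*p + 1)) :=
    mul_nonneg (by linarith) (by positivity)
  have key : (p * (1-p)) * (x * (1-p)^2) ≤ (p * (1-p)) * (2*p^2 - (1-p)^3) := by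
    linarith [F1', F2'', F3'', F4', F5']
  have key2 : x * (1-p)^2 ≤ 2*p^2 - (1-p)^3 :=
    le_of_mul_le_mul_left key (by positivity)
  rw [le_div_iff₀ hu2]
  linarith [key2]
end

section
/- Fix a real number p with 0 < p < (1/3)·(1 − 8/(1 + 3√57)^{1/3} + (1 + 3√57)^{1/3}) (the root of 2p² = (1−p)³, approximately 0.361) and let (φ, ĝ) be a potential for the immediate-release game. Then (0,2) is not a mining state of φ, i.e., φ(0,2) > p·φ(1,2) + (1−p)·φ(0,3) − (1−p)·ĝ. -/
open Real

lemma two_mul_sq_eq_one_sub_pow_three_of_pow_three_eq {c : ℝ} (hc : c ≠ 0)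
    (hc3 : c ^ 3 = 1 + 3 * √57) :
    2 * ((1 / 3) * (1 - 8 / c + c)) ^ 2 = (1 - (1 / 3) * (1 - 8 / c + c)) ^ 3 := by
  have h57 : √57 ^ 2 = 57 := sq_sqrt (by norm_num)
  have hc6 : c ^ 6 = (1 + 3 * √57) ^ 2 := by rw [← hc3]; ring
  field_simp
  linear_combination hc6 + 9 * h57 - 2 * hc3

lemma two_mul_sq_lt_one_sub_pow_three_of_lt {p R : ℝ} (hR : 2 * R ^ 2 = (1 - R) ^ 3)
    (hp0 : 0 ≤ p) (hpR : p < R) : 2 * p ^ 2 < (1 - p) ^ 3 := by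
  have hsq : 0 ≤ (1 - p) ^ 2 + (1 - p) * (1 - R) + (1 - R) ^ 2 := by
    nlinarith [sq_nonneg (2 - p - R), sq_nonneg (1 - p), sq_nonneg (1 - R)]
  nlinarith [mul_nonneg (sub_pos.2 hpR).le hsq, mul_pos (sub_pos.2 hpR) (by linarith : 0 < R + p)]

lemma mul_sq_add_mul_pow_three_lt {p : ℝ} (hp0 : 0 < p) (hp1 : p < 1)
    (h : 2 * p ^ 2 < (1 - p) ^ 3) :
    p * (p / (1 - p)) ^ 2 + (1 - p) * (p / (1 - p)) ^ 3 < (1 - p) * p := by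
  have h1p : 0 < 1 - p := sub_pos.2 hp1
  have hsum : p * (p / (1 - p)) ^ 2 + (1 - p) * (p / (1 - p)) ^ 3 = 2 * p ^ 3 / (1 - p) ^ 2 := by
    field_simp
    ring
  rw [hsum, div_lt_iff₀ (by positivity)]
  nlinarith [mul_lt_mul_of_pos_left h hp0]

namespace MiningPotential

variable {p : ℝ} (P : MiningPotential p)

lemma φ_zero_le_of_lt {a b s : ℕ} (hab : a ≤ b) (hs : s < b) : P.φ 0 s ≤ P.φ a b := by
  rw [P.bellman a b hab]
  exact List.le_max_of_le' _ (List.mem_map_of_mem (List.mem_range.2 hs)) le_rfl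

lemma φ_succ_succ_le {a b : ℕ} (h : a ≤ b + 1) :
    P.φ (a + 1) (b + 1) ≤ P.φ a b + (p / (1 - p)) ^ (1 + b - a) := by
  simpa using P.shift a b 1 h

end MiningPotential

/-- For any potential `(φ, ĝ)` of the immediate-release game with
`0 < p < (1/3)·(1 − 8/(1 + 3√57)^{1/3} + (1 + 3√57)^{1/3})` (the root of
`2p² = (1−p)³`, ≈ 0.361): the state `(0,2)` is not a mining state of `φ`,
i.e. `φ(0,2) > p·φ(1,2) + (1−p)·φ(0,3) − (1−p)·ĝ`. -/
theorem zero_two_not_mining {p : ℝ} (hp0 : 0 < p)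
    (hp : p < (1 / 3) * (1 - 8 / (1 + 3 * Real.sqrt 57) ^ ((1 : ℝ) / 3)
        + (1 + 3 * Real.sqrt 57) ^ ((1 : ℝ) / 3)))
    (P : MiningPotential p) :
    P.φ 0 2 > p * P.φ 1 2 + (1 - p) * P.φ 0 3 - (1 - p) * P.gain := by
  have hcube : ((1 + 3 * √57) ^ ((1 : ℝ) / 3)) ^ 3 = 1 + 3 * √57 := by
    rw [one_div]
    exact rpow_inv_natCast_pow (by positivity) three_ne_zero
  have hcubic : 2 * p ^ 2 < (1 - p) ^ 3 :=
    two_mul_sq_lt_one_sub_pow_three_of_lt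
      (two_mul_sq_eq_one_sub_pow_three_of_pow_three_eq (by positivity) hcube) hp0.le hp
  have hp1 : p < 1 := by nlinarith [sq_nonneg (1 - p)]
  have h12 : P.φ 1 2 ≤ P.φ 0 2 + (p / (1 - p)) ^ 2 := by
    linarith [P.φ_succ_succ_le (a := 0) (b := 1) (by norm_num),
      P.φ_zero_le_of_lt (a := 0) (b := 2) (s := 1) (by norm_num) (by norm_num)]
  have h03 : P.φ 0 3 ≤ P.φ 0 2 + (p / (1 - p)) ^ 3 := by
    linarith [P.mono 0 3 (by norm_num), P.φ_succ_succ_le (a := 0) (b := 2) (by norm_num)]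
  linarith [mul_sq_add_mul_pow_three_lt hp0 hp1 hcubic,
    mul_le_mul_of_nonneg_left h12 hp0.le, mul_le_mul_of_nonneg_left h03 (sub_pos.2 hp1).le,
    mul_le_mul_of_nonneg_left P.gain_ge (sub_pos.2 hp1).le]
end

section
/- Fix a real number p with 0 < p < (3−√5)/2 and let (φ, ĝ) be a potential for the immediate-release game. If (0,1) is a mining state of φ, then (0,2) is also a mining state of φ, and φ(0,1) ≤ (1−p)·φ(0,2) − p·(1 − 3p + p²)/(1−p). -/
/-- For any potential `(φ, ĝ)` of the immediate-release game with
`0 < p < (3−√5)/2`: if `(0,1)` is a mining state of `φ`, then `(0,2)` is also a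
mining state of `φ` and `φ(0,1) ≤ (1−p)·φ(0,2) − p·(1 − 3p + p²)/(1−p)`. -/
theorem zero_one_mining_implies {p : ℝ} (hp0 : 0 < p)
    (hp : p < (3 - Real.sqrt 5) / 2)
    (P : MiningPotential p) (hmine : P.IsMiningState 0 1) :
    P.IsMiningState 0 2 ∧
      P.φ 0 1 ≤ (1 - p) * P.φ 0 2 - p * (1 - 3 * p + p ^ 2) / (1 - p) := by
  obtain ⟨-, hm⟩ := hmine
  norm_num at hm
  have hs5 : Real.sqrt 5 ^ 2 = 5 := Real.sq_sqrt (by norm_num)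
  have hs0 : (0:ℝ) ≤ Real.sqrt 5 := Real.sqrt_nonneg 5
  have h52 : (2:ℝ) < Real.sqrt 5 := by nlinarith
  have h1p : (0:ℝ) < 1 - p := by linarith
  have hq : 0 < 1 - 3 * p + p ^ 2 := by nlinarith
  -- value of φ 0 1
  have hwin0 := P.win 0
  norm_num [P.zero] at hwin0
  have hb00 := P.bellman 0 0 le_rfl
  norm_num [P.zero] at hb00
  have h01 : (1 - p) * P.φ 0 1 = P.gain - p := by
    rw [hwin0] at hb00
    linarith
  -- shift bound on φ 1 1
  have hshift := P.shift 0 0 1 (by norm_num)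
  norm_num [P.zero] at hshift
  have h11' : P.φ 1 1 * (1 - p) ≤ p := by
    have := hshift
    rw [le_div_iff₀ h1p] at this
    linarith [this]
  have hg := P.gain_ge
  have hdivmul : p * (1 - 3 * p + p ^ 2) / (1 - p) * (1 - p) = p * (1 - 3 * p + p ^ 2) :=
    div_mul_cancel₀ _ (ne_of_gt h1p)
  -- second conclusion
  have goal2 : P.φ 0 1 ≤ (1 - p) * P.φ 0 2 - p * (1 - 3 * p + p ^ 2) / (1 - p) := by
    nlinarith [h01, h11', hg, hm, hdivmul, h1p]
  have h01nn : 0 ≤ P.φ 0 1 := P.nonneg 0 1 (by norm_num)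
  -- Bellman at (0,2)
  have hb02 := P.bellman 0 2 (by norm_num)
  have hrange : List.range 2 = [0, 1] := by decide
  rw [hrange] at hb02
  simp only [List.map_cons, List.map_nil, List.foldr_cons, List.foldr_nil, P.zero] at hb02
  norm_num at hb02
  set M := p * P.φ 1 2 + (1 - p) * P.φ 0 3 - (1 - p) * P.gain with hM
  have hdpos : 0 < p * (1 - 3 * p + p ^ 2) / (1 - p) :=
    div_pos (mul_pos hp0 hq) h1p
  have hMge : P.φ 0 1 ≤ M := by
    by_contra hcon
    push_neg at hcon
    have h02 : P.φ 0 2 = P.φ 0 1 := by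
      rw [hb02, max_eq_left hcon.le, max_eq_right h01nn]
    rw [h02] at goal2
    nlinarith
  have h02M : P.φ 0 2 = M := by
    rw [hb02, max_eq_right hMge, max_eq_right (hMge.trans' h01nn |>.trans (le_refl M) |> fun h => h)]
  exact ⟨⟨by norm_num, by norm_num; rw [h02M]⟩, goal2⟩
end

section
/- Fix a real number p with 0 < p ≤ (1/3)·(1 − 8/(1 + 3√57)^{1/3} + (1 + 3√57)^{1/3}) (the root of 2p² = (1−p)³, approximately 0.361). Then every potential (φ, ĝ) for the immediate-release game satisfies ĝ = p and φ(0,1) = φ(0,0) = 0; that is, the strategic miner's optimal expected gain per level is exactly his fair share p. -/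
set_option maxHeartbeats 1000000

/-- If `0 < p ≤ (1/3)·(1 − 8/(1 + 3√57)^{1/3} + (1 + 3√57)^{1/3})` (the root of
`2p² = (1−p)³`, ≈ 0.361), then every potential `(φ, ĝ)` of the
immediate-release game satisfies `ĝ = p` and `φ(0,1) = φ(0,0) = 0`: the
strategic miner's optimal gain per level is exactly his fair share `p`. -/
theorem frontier_best_response_below_threshold {p : ℝ} (hp0 : 0 < p)
    (hp : p ≤ (1 / 3) * (1 - 8 / (1 + 3 * Real.sqrt 57) ^ ((1 : ℝ) / 3)
        + (1 + 3 * Real.sqrt 57) ^ ((1 : ℝ) / 3)))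
    (P : MiningPotential p) :
    P.gain = p ∧ P.φ 0 1 = 0 ∧ P.φ 0 0 = 0 := by
  -- Numeric preliminaries: from `hp`, derive `p ≤ 0.3625`.
  have hs : Real.sqrt 57 ≤ 7.55 := by
    nlinarith [Real.sq_sqrt (by norm_num : (0:ℝ) ≤ 57), Real.sqrt_nonneg 57]
  have hbpos : (0:ℝ) < 1 + 3 * Real.sqrt 57 := by nlinarith [Real.sqrt_nonneg 57]
  have hp' : p ≤ 0.3625 := by
    set c : ℝ := (1 + 3 * Real.sqrt 57) ^ ((1:ℝ)/3) with hcdef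
    have hcpos : 0 < c := Real.rpow_pos_of_pos hbpos _
    have hc : c ≤ 2.872 := by
      have h1 : (1 + 3 * Real.sqrt 57) ≤ (2.872:ℝ) ^ (3:ℕ) := by nlinarith
      calc c ≤ ((2.872:ℝ) ^ (3:ℕ)) ^ ((1:ℝ)/3) :=
            Real.rpow_le_rpow hbpos.le h1 (by norm_num)
        _ = 2.872 := by
            rw [← Real.rpow_natCast (2.872:ℝ) 3, ← Real.rpow_mul (by norm_num)]
            norm_num
    have h8 : (8:ℝ)/2.872 ≤ 8 / c := by
      apply div_le_div_of_nonneg_left (by norm_num) hcpos hc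
    have hnum : (1:ℝ)/3 * (1 - 8/2.872 + 2.872) ≤ 0.3625 := by norm_num
    linarith
  clear hp hs
  have h1p : (0:ℝ) < 1 - p := by linarith
  obtain ⟨q, hqdef⟩ : ∃ q : ℝ, q = p / (1 - p) := ⟨_, rfl⟩
  have hq0 : 0 < q := hqdef ▸ div_pos hp0 h1p
  have hq : q * (1 - p) = p := hqdef ▸ div_mul_cancel₀ p h1p.ne'
  have hq' : q ≤ 0.569 := by
    rw [hqdef, div_le_iff₀ h1p]; nlinarith
  -- products of numeric bounds
  have hpq : p * q ≤ 0.3625 * 0.569 := mul_le_mul hp' hq' hq0.le (by norm_num)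
  have hpp : p * p ≤ 0.3625 * 0.3625 := mul_le_mul hp' hp' hp0.le (by norm_num)
  have hppq : p * p * q ≤ 0.3625 * 0.3625 * 0.569 :=
    mul_le_mul hpp hq' hq0.le (by norm_num)
  -- Structural facts.
  have hz := P.zero
  have hge := P.gain_ge
  have hδ0 : 0 ≤ P.φ 0 1 := P.nonneg 0 1 (by norm_num)
  have hw0 := P.win 0
  have hw1 := P.win 1
  norm_num [hz] at hw0 hw1
  have hB00 := P.bellman 0 0 (le_refl 0)
  have hB01 := P.bellman 0 1 (by norm_num)
  have hB11 := P.bellman 1 1 (le_refl 1)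
  have hB02 := P.bellman 0 2 (by norm_num)
  simp [List.range_succ, hz] at hB00 hB01 hB11 hB02
  have hsh1 := P.shift 0 1 1 (by norm_num)
  have hsh2 := P.shift 0 2 1 (by norm_num)
  have hm3 := P.mono 0 3 (by norm_num)
  norm_num at hsh1 hsh2 hm3
  rw [← hqdef] at hsh1 hsh2
  -- the gain equation from the Bellman equation at (0,0):
  have hw0p : p * P.φ 1 0 = p * (1 - P.gain) := by rw [hw0]
  have hg : (1 - p) * P.φ 0 1 = P.gain - p := by
    linarith only [hB00, hw0p]
  -- the key claim: φ 0 1 = 0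
  have hδ : P.φ 0 1 = 0 := by
    rcases eq_or_lt_of_le hδ0 with h | hδpos
    · exact h.symm
    exfalso
    -- bound on φ 1 1
    have hw1p : p * P.φ 2 1 = p * (2 - P.gain) := by rw [hw1]
    have hA : P.φ 1 1 ≤ p + (1 - p) * q ^ 2 := by
      rw [hB11]
      apply max_le
      · have := mul_nonneg h1p.le (sq_nonneg q)
        linarith only [this, hp0]
      · linarith only [mul_le_mul_of_nonneg_left hsh1 h1p.le, hw1p, hg]
    -- the Bellman maximum at (0,1) is attained by mining
    have hδeq : P.φ 0 1 = p * P.φ 1 1 + (1 - p) * P.φ 0 2 - (1 - p) * P.gain := by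
      rcases max_choice 0 (p * P.φ 1 1 + (1 - p) * P.φ 0 2 - (1 - p) * P.gain)
        with h | h
      · rw [hB01, h] at hδpos; exact absurd hδpos (lt_irrefl 0)
      · rw [hB01, h]
    have hq2a : p * ((1 - p) * q ^ 2) = p ^ 2 * q := by
      linear_combination p * q * hq
    have hδeqp : p * P.φ 0 1 = p * (p * P.φ 1 1) + p * ((1 - p) * P.φ 0 2)
        - p * ((1 - p) * P.gain) := by linear_combination p * hδeq
    -- case analysis on the Bellman max at (0,2)
    rcases max_choice (P.φ 0 1) (p * P.φ 1 2 + (1 - p) * P.φ 0 3 - (1 - p) * P.gain)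
      with h | h
    · -- φ 0 2 = φ 0 1
      have h02 : P.φ 0 2 = P.φ 0 1 := by
        rw [hB02, h]
        exact max_eq_right hδpos.le
      have hbr1 : 2 * p + p * q - 1 ≤ 0 := by linarith only [hpq, hp']
      have key : p * P.φ 0 1 ≤ p * (2 * p + p * q - 1) := by
        rw [h02] at hδeq
        linarith only [mul_le_mul_of_nonneg_left hA hp0.le,
          mul_le_mul_of_nonneg_left hge h1p.le, hq2a, hδeq]
      linarith only [key, mul_pos hp0 hδpos,
        mul_nonpos_of_nonneg_of_nonpos hp0.le hbr1]
    · -- the Bellman maximum at (0,2) is attained by mining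
      have h02 : P.φ 0 2 = p * P.φ 1 2 + (1 - p) * P.φ 0 3 - (1 - p) * P.gain := by
        have hpos : 0 < p * P.φ 1 2 + (1 - p) * P.φ 0 3 - (1 - p) * P.gain := by
          calc 0 < P.φ 0 1 := hδpos
          _ ≤ _ := h ▸ le_max_left _ _
        rw [hB02, h]
        exact max_eq_right hpos.le
      have hq2c : p ^ 2 * ((1 - p) * q ^ 2) = p ^ 3 * q := by
        linear_combination p ^ 2 * q * hq
      have hq3 : (1 - p) ^ 2 * q ^ 3 = p ^ 2 * q := by
        linear_combination (q ^ 2 * (1 - p) + p * q) * hq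
      -- p·φ02 ≤ p·δ + p·q² + (1−p)·q³ − (1−p)·gain
      have S1 : p * P.φ 0 2 ≤ p * P.φ 0 1 + p * q ^ 2 + (1 - p) * q ^ 3
          - (1 - p) * P.gain := by
        linarith only [mul_le_mul_of_nonneg_left hsh1 hp0.le,
          mul_le_mul_of_nonneg_left (hm3.trans hsh2) h1p.le, h02]
      have hbr2 : p ^ 2 * (1 + q) + 2 * p * q + p - 1 ≤ 0 := by
        nlinarith [hppq, hpp, hpq, hp']
      have S2 : p ^ 2 * P.φ 0 1 ≤ p * (p ^ 2 * (1 + q) + 2 * p * q + p - 1) := by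
        linarith only [mul_le_mul_of_nonneg_left hA (by positivity : (0:ℝ) ≤ p ^ 2),
          mul_le_mul_of_nonneg_left S1 h1p.le,
          mul_le_mul_of_nonneg_left hge (by positivity : (0:ℝ) ≤ (1 - p) ^ 2),
          mul_le_mul_of_nonneg_left hge (mul_pos hp0 h1p).le,
          hq2a, hq2c, hq3, hδeqp]
      linarith only [S2, mul_pos (mul_pos hp0 hp0) hδpos,
        mul_nonpos_of_nonneg_of_nonpos hp0.le hbr2]
  refine ⟨?_, hδ, hz⟩
  rw [hδ] at hg
  linarith [hg]
end

section
/- Fix a real number p with 0 < p ≤ r, where r is the root in (0,1/2) of p³ − 6p² + 5p − 1 = 0 (≈ 0.308). Let (φ, p) be a potential for the immediate-release game with ĝ = p, set λ = (1−p)²/(1−2p), μ = p²/(1−2p), c = p·(1−p)/(1−2p), and define σ : ℕ×ℕ → ℝ by σ(a,b) = φ(a,b) if a ≤ b, and σ(a,b) = a·λ − b·μ − c if a ≥ b+1 (the two formulas agree when a = b+1, since φ(b+1,b) = b+1−p = (b+1)λ − bμ − c). Then σ satisfies the strategic-release Bellman recurrence with gain p: for all (a,b) ∈ ℕ×ℕ,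 σ(a,b) = max( max_{0 ≤ s < b} σ(0,s), p·σ(a+1,b) + (1−p)·σ(a,b+1) − p(1−p), [σ(a−b−1, 0) + b + 1 − p if a ≥ b+1] ), where the maximum over s is omitted when b = 0 and the last option is omitted when a < b+1. -/
theorem List.foldr_max_eq_of_forall_le {α : Type*} [LinearOrder α] {l : List α} {x : α}
    (h : ∀ y ∈ l, y ≤ x) : l.foldr max x = x := by
  induction l with
  | nil => rfl
  | cons y l ih =>
    rw [List.foldr_cons, ih fun z hz => h z (List.mem_cons_of_mem _ hz),
      max_eq_right (h y List.mem_cons_self)]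

/-- The cubic `x³ - 6x² + 5x - 1` is negative on `(-∞, 0]` and positive on `[2/5, 1/2)`, so a root
`r < 1/2` lies in `(0, 2/5)`, where the cubic is increasing. -/
theorem mul_one_sub_sq_le_of_le_root {p r : ℝ} (hr : r < 1 / 2)
    (hroot : r ^ 3 - 6 * r ^ 2 + 5 * r - 1 = 0) (hpr : p ≤ r) :
    p * (1 - p) ^ 2 ≤ (1 - 2 * p) ^ 2 := by
  have hr' : r ≤ 2 / 5 := by
    by_contra! h
    nlinarith [mul_pos (sub_pos.2 h) (sub_pos.2 hr)]
  nlinarith [mul_nonneg (sub_nonneg.2 hpr)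
    (show 0 ≤ p ^ 2 + p * r + r ^ 2 - 6 * p - 6 * r + 5 by nlinarith)]

structure IsReleaseCoeffs (p lam mu c : ℝ) : Prop where
  lam_sub_mu : lam - mu = 1
  lam_sub_c : lam - c = 1 - p
  mining : p * lam - (1 - p) * mu = p * (1 - p)

theorem isReleaseCoeffs {p : ℝ} (hp : 1 - 2 * p ≠ 0) :
    IsReleaseCoeffs p ((1 - p) ^ 2 / (1 - 2 * p)) (p ^ 2 / (1 - 2 * p))
      (p * (1 - p) / (1 - 2 * p)) where
  lam_sub_mu := by rw [div_sub_div_same, div_eq_one_iff_eq hp]; ring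
  lam_sub_c := by rw [div_sub_div_same, div_eq_iff hp]; ring
  mining := by rw [mul_div_assoc', mul_div_assoc', div_sub_div_same, div_eq_iff hp]; ring

namespace MiningPotential

variable {p : ℝ} (P : MiningPotential p)

theorem φ_zero_le {k s : ℕ} (hk : k ≤ s) : P.φ 0 s ≤ P.φ k s := by
  induction k with
  | zero => rfl
  | succ k ih => exact (ih (by omega)).trans (P.mono k s (by omega))

theorem φ_self_le (s : ℕ) : P.φ s s ≤ s * (p / (1 - p)) := by
  simpa [P.zero] using P.shift 0 0 s (by omega)

theorem φ_zero_le_self (hp : p ≤ 1 / 2) (s : ℕ) : P.φ 0 s ≤ s := by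
  have : p / (1 - p) ≤ 1 := (div_le_one (by linarith)).2 (by linarith)
  calc P.φ 0 s ≤ s * (p / (1 - p)) := (P.φ_zero_le le_rfl).trans (P.φ_self_le s)
    _ ≤ s := mul_le_of_le_one_right s.cast_nonneg this

theorem bellman_of_eqOn {σ : ℕ → ℕ → ℝ} (hgain : P.gain = p)
    (hσ : ∀ a b : ℕ, a ≤ b + 1 → σ a b = P.φ a b) {a b : ℕ} (hab : a ≤ b) :
    σ a b = ((List.range b).map (fun s => σ 0 s)).foldr max
      (p * σ (a + 1) b + (1 - p) * σ a (b + 1) - p * (1 - p)) := by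
  have hlist : (List.range b).map (fun s => σ 0 s) = (List.range b).map (fun s => P.φ 0 s) :=
    List.map_congr_left fun s _ => hσ 0 s (by omega)
  rw [hσ a b (by omega), hlist, hσ (a + 1) b (by omega), hσ a (b + 1) (by omega), P.bellman a b hab,
    hgain, mul_comm (1 - p) p]

end MiningPotential

section ReleaseRegion

variable {p lam mu c : ℝ} {σ : ℕ → ℕ → ℝ}

theorem max_mine_release_eq (hp : p < 1 / 2) (hcoef : IsReleaseCoeffs p lam mu c) (hc : 0 ≤ c)
    (hmine : p * lam ≤ 1 - 2 * p) (hσ : ∀ a b : ℕ, b + 1 ≤ a → σ a b = a * lam - b * mu - c)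
    (hσ00 : σ 0 0 = 0) (hσself : ∀ s : ℕ, σ s s ≤ s * (p / (1 - p))) {a b : ℕ}
    (hab : b + 1 ≤ a) :
    max (p * σ (a + 1) b + (1 - p) * σ a (b + 1) - p * (1 - p)) (σ (a - b - 1) 0 + (b + 1) - p) =
      σ a b := by
  obtain ⟨hlm, hlc, hmining⟩ := hcoef
  rcases hab.eq_or_lt with rfl | hab
  · have hrelease : σ (b + 1 - b - 1) 0 + (b + 1) - p = σ (b + 1) b := by
      rw [Nat.add_sub_cancel_left, Nat.sub_self, hσ00, hσ (b + 1) b le_rfl]; push_cast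
      linear_combination -(b * hlm + hlc)
    have hnext : σ (b + 1 + 1) b = b + 1 - p + lam := by
      rw [hσ (b + 1 + 1) b (by omega)]; push_cast
      linear_combination b * hlm + hlc
    have hdiag : (1 - p) * σ (b + 1) (b + 1) ≤ (b + 1) * p := by
      have : 1 - p ≠ 0 := by linarith
      calc (1 - p) * σ (b + 1) (b + 1) ≤ (1 - p) * ((b + 1 : ℕ) * (p / (1 - p))) :=
            mul_le_mul_of_nonneg_left (hσself _) (by linarith)
        _ = (b + 1) * p := by push_cast; field_simp
    have hb : 0 ≤ (b : ℝ) * (1 - 2 * p) := mul_nonneg b.cast_nonneg (by linarith)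
    rw [hrelease, max_eq_right]
    rw [hσ (b + 1) b le_rfl, hnext]; push_cast
    linear_combination (-(b : ℝ) * hlm - hlc) + hdiag + hmine + hb
  · have hmine_eq : p * σ (a + 1) b + (1 - p) * σ a (b + 1) - p * (1 - p) = σ a b := by
      rw [hσ (a + 1) b (by omega), hσ a (b + 1) hab, hσ a b hab.le]; push_cast
      linear_combination hmining
    have hrelease : σ (a - b - 1) 0 + (b + 1) - p = σ a b - c := by
      have hcast : ((a - b - 1 : ℕ) : ℝ) = a - b - 1 := by
        rw [Nat.sub_sub, Nat.cast_sub hab.le]; push_cast; ring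
      rw [hσ (a - b - 1) 0 (by omega), hcast, hσ a b hab.le]; push_cast
      linear_combination -(b * hlm + hlc)
    rw [hmine_eq, hrelease, max_eq_left (by linarith)]

theorem bellman_of_release_region (hp : p < 1 / 2) (hcoef : IsReleaseCoeffs p lam mu c)
    (hc : 0 ≤ c) (hmine : p * lam ≤ 1 - 2 * p)
    (hσ : ∀ a b : ℕ, b + 1 ≤ a → σ a b = a * lam - b * mu - c) (hσ00 : σ 0 0 = 0)
    (hσself : ∀ s : ℕ, σ s s ≤ s * (p / (1 - p))) (hσzero : ∀ s : ℕ, σ 0 s ≤ s) {a b : ℕ}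
    (hab : b + 1 ≤ a) :
    σ a b = ((List.range b).map (fun s => σ 0 s)).foldr max
      (max (p * σ (a + 1) b + (1 - p) * σ a (b + 1) - p * (1 - p))
        (σ (a - b - 1) 0 + (b + 1) - p)) := by
  rw [max_mine_release_eq hp hcoef hc hmine hσ hσ00 hσself hab]
  refine (List.foldr_max_eq_of_forall_le ?_).symm
  simp only [List.mem_map, List.mem_range]
  rintro _ ⟨s, hs, rfl⟩
  have hσab : (b : ℝ) + 1 - p ≤ σ a b := by
    have hlam : 0 ≤ lam := by linarith [hcoef.lam_sub_c]
    have hab' : (b : ℝ) + 1 ≤ a := by exact_mod_cast hab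
    rw [hσ a b hab]
    nlinarith [hcoef.lam_sub_mu, hcoef.lam_sub_c, mul_nonneg (sub_nonneg.2 hab') hlam]
  have hs' : (s : ℝ) + 1 ≤ b := by exact_mod_cast hs
  linarith [hσzero s]

end ReleaseRegion

theorem strategic_release_potential_solution_general (p r : ℝ)
    (hr2 : r < 1 / 2)
    (hroot : r ^ 3 - 6 * r ^ 2 + 5 * r - 1 = 0)
    (hp0 : 0 < p) (hpr : p ≤ r)
    (P : MiningPotential p) (hgain : P.gain = p)
    (lam mu c : ℝ)
    (hlam : lam = (1 - p) ^ 2 / (1 - 2 * p))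
    (hmu : mu = p ^ 2 / (1 - 2 * p))
    (hc : c = p * (1 - p) / (1 - 2 * p))
    (σ : ℕ → ℕ → ℝ)
    (hσlow : ∀ a b : ℕ, a ≤ b → σ a b = P.φ a b)
    (hσhigh : ∀ a b : ℕ, b + 1 ≤ a → σ a b = (a : ℝ) * lam - (b : ℝ) * mu - c) :
    ∀ a b : ℕ,
      σ a b = ((List.range b).map (fun s => σ 0 s)).foldr max
        (if b + 1 ≤ a then
          max (p * σ (a + 1) b + (1 - p) * σ a (b + 1) - p * (1 - p))
            (σ (a - b - 1) 0 + (b + 1) - p)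
        else p * σ (a + 1) b + (1 - p) * σ a (b + 1) - p * (1 - p)) := by
  have hp : p < 1 / 2 := hpr.trans_lt hr2
  have hcoef : IsReleaseCoeffs p lam mu c := hlam ▸ hmu ▸ hc ▸ isReleaseCoeffs (by linarith)
  have hc0 : 0 ≤ c := hc ▸ div_nonneg (by nlinarith) (by linarith)
  have hmine : p * lam ≤ 1 - 2 * p := by
    rw [hlam, mul_div_assoc', div_le_iff₀ (by linarith)]
    nlinarith [mul_one_sub_sq_le_of_le_root hr2 hroot hpr]
  have hσφ : ∀ a b : ℕ, a ≤ b + 1 → σ a b = P.φ a b := by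
    intro a b hab
    rcases hab.lt_or_eq with hab | rfl
    · exact hσlow a b (by omega)
    · rw [hσhigh _ _ le_rfl, P.win, P.zero, hgain]; push_cast
      linear_combination b * hcoef.lam_sub_mu + hcoef.lam_sub_c
  intro a b
  split_ifs with hab
  · refine bellman_of_release_region hp hcoef hc0 hmine hσhigh ?_ ?_ ?_ hab
    · rw [hσlow 0 0 le_rfl, P.zero]
    · exact fun s => (hσlow s s le_rfl).trans_le (P.φ_self_le s)
    · exact fun s => (hσlow 0 s s.zero_le).trans_le (P.φ_zero_le_self hp.le s)
  · exact P.bellman_of_eqOn hgain hσφ (by omega)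

/-- Let `0 < p ≤ r` where `r` is the root in `(0,1/2)` of `p³ − 6p² + 5p − 1`
(≈ 0.308), and let `(φ, p)` be a potential for the immediate-release game whose
gain equals `p`.  With `λ = (1−p)²/(1−2p)`, `μ = p²/(1−2p)`,
`c = p(1−p)/(1−2p)`, define `σ(a,b) = φ(a,b)` for `a ≤ b` and
`σ(a,b) = aλ − bμ − c` for `a ≥ b+1` (the two formulas agree at `a = b+1`).
Then `σ` satisfies the strategic-release Bellman recurrence with gain `p`:
`σ(a,b) = max( max_{0 ≤ s < b} σ(0,s),
               p·σ(a+1,b) + (1−p)·σ(a,b+1) − p(1−p),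
               [σ(a−b−1,0) + b + 1 − p  if a ≥ b+1] )`,
where the maximum over `s` is omitted when `b = 0` and the release option is
omitted when `a < b + 1`. -/
theorem strategic_release_potential_solution (p r : ℝ)
    (hr0 : 0 < r) (hr2 : r < 1 / 2)
    (hroot : r ^ 3 - 6 * r ^ 2 + 5 * r - 1 = 0)
    (hp0 : 0 < p) (hpr : p ≤ r)
    (P : MiningPotential p) (hgain : P.gain = p)
    (lam mu c : ℝ)
    (hlam : lam = (1 - p) ^ 2 / (1 - 2 * p))
    (hmu : mu = p ^ 2 / (1 - 2 * p))
    (hc : c = p * (1 - p) / (1 - 2 * p))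
    (σ : ℕ → ℕ → ℝ)
    (hσlow : ∀ a b : ℕ, a ≤ b → σ a b = P.φ a b)
    (hσhigh : ∀ a b : ℕ, b + 1 ≤ a → σ a b = (a : ℝ) * lam - (b : ℝ) * mu - c) :
    ∀ a b : ℕ,
      σ a b = ((List.range b).map (fun s => σ 0 s)).foldr max
        (if b + 1 ≤ a then
          max (p * σ (a + 1) b + (1 - p) * σ a (b + 1) - p * (1 - p))
            (σ (a - b - 1) 0 + (b + 1) - p)
        else p * σ (a + 1) b + (1 - p) * σ a (b + 1) - p * (1 - p)) :=
  strategic_release_potential_solution_general p r hr2 hroot hp0 hpr P hgain lam mu c hlam hmu hc σ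
    hσlow hσhigh
end

section
/- Fix a real number p with 0 < p < 1 and 1 − p² + 2p³ − p⁴ ≠ 0. Consider the linear system in the five real unknowns (ĝ, x₀₁, x₁₁, x₁₂, x₂₂): (i) 0 = p·(1 − ĝ) + (1−p)·x₀₁ − ĝ·(1−p); (ii) x₀₁ = p·x₁₁ + (1−p)·x₀₁ − ĝ·(1−p); (iii) x₁₁ = p·(2 − ĝ) + (1−p)·x₁₂ − ĝ·(1−p); (iv) x₁₂ = p·x₂₂ + (1−p)·x₀₁ − ĝ·(1−p); (v) x₂₂ = p·(3 − ĝ) + (1−p)·x₀₁ − ĝ·(1−p). This system has a unique solution, and in it ĝ = p²·(2 + 2p − 5p² + 2p³)/(1 − p² + 2p³ − p⁴) and x₀₁ = (ĝ − p)/(1 − p). -/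
/-!
Equation (i) reads `(1 - p) x₀₁ = ĝ - p`, and (iii)–(v) express `x₁₁, x₁₂, x₂₂` by back
substitution in terms of `ĝ` and `x₀₁`. Eliminating everything but `ĝ` from (i)–(v) leaves
`ĝ (1 - p² + 2p³ - p⁴) = p² (2 + 2p - 5p² + 2p³)`, so the solution is forced, and conversely
these values satisfy the system.
-/

namespace PotentialSystem

/-- The system (i)–(v) in the unknowns `v = (ĝ, x₀₁, x₁₁, x₁₂, x₂₂)`. -/
def Holds (p : ℝ) (v : ℝ × ℝ × ℝ × ℝ × ℝ) : Prop :=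
  0 = p * (1 - v.1) + (1 - p) * v.2.1 - v.1 * (1 - p)
    ∧ v.2.1 = p * v.2.2.1 + (1 - p) * v.2.1 - v.1 * (1 - p)
    ∧ v.2.2.1 = p * (2 - v.1) + (1 - p) * v.2.2.2.1 - v.1 * (1 - p)
    ∧ v.2.2.2.1 = p * v.2.2.2.2 + (1 - p) * v.2.1 - v.1 * (1 - p)
    ∧ v.2.2.2.2 = p * (3 - v.1) + (1 - p) * v.2.1 - v.1 * (1 - p)

def backSubst (p g x01 : ℝ) : ℝ × ℝ × ℝ × ℝ × ℝ :=
  let x22 := p * (3 - g) + (1 - p) * x01 - g * (1 - p)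
  let x12 := p * x22 + (1 - p) * x01 - g * (1 - p)
  let x11 := p * (2 - g) + (1 - p) * x12 - g * (1 - p)
  (g, x01, x11, x12, x22)

noncomputable def gain (p : ℝ) : ℝ :=
  p ^ 2 * (2 + 2 * p - 5 * p ^ 2 + 2 * p ^ 3) / (1 - p ^ 2 + 2 * p ^ 3 - p ^ 4)

noncomputable def solution (p : ℝ) : ℝ × ℝ × ℝ × ℝ × ℝ :=
  backSubst p (gain p) ((gain p - p) / (1 - p))

variable {p : ℝ} {v : ℝ × ℝ × ℝ × ℝ × ℝ}

theorem Holds.one_sub_mul_x01 (h : Holds p v) : (1 - p) * v.2.1 = v.1 - p := by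
  linear_combination -h.1

theorem Holds.gain_mul (h : Holds p v) :
    v.1 * (1 - p ^ 2 + 2 * p ^ 3 - p ^ 4) = p ^ 2 * (2 + 2 * p - 5 * p ^ 2 + 2 * p ^ 3) := by
  obtain ⟨h1, h2, h3, h4, h5⟩ := h
  -- the multipliers of (v), (iv), (iii), (ii) eliminate `x₂₂`, `x₁₂`, `x₁₁`, `x₀₁` in turn
  linear_combination (p * (1 - (1 - p) ^ 2 - p * (1 - p) ^ 2)) * h1
    + (1 - p) * h2 + (p * (1 - p)) * h3 + (p * (1 - p) ^ 2) * h4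
    + (p ^ 2 * (1 - p) ^ 2) * h5

theorem Holds.gain_eq (h : Holds p v) (hden : 1 - p ^ 2 + 2 * p ^ 3 - p ^ 4 ≠ 0) :
    v.1 = gain p :=
  (eq_div_iff hden).2 h.gain_mul

theorem Holds.x01_eq (h : Holds p v) (hp : p ≠ 1) : v.2.1 = (v.1 - p) / (1 - p) :=
  (eq_div_iff (sub_ne_zero.2 hp.symm)).2 (by linear_combination h.one_sub_mul_x01)

theorem Holds.eq_backSubst (h : Holds p v) : v = backSubst p v.1 v.2.1 := by
  obtain ⟨g, x01, x11, x12, x22⟩ := v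
  obtain ⟨-, -, h3, h4, h5⟩ := h
  simp only [backSubst, ← h5, ← h4, ← h3]

/-- Equation (ii) is recovered from the eliminated equation for `ĝ` after cancelling the
factor `1 - p`. -/
theorem holds_backSubst {g x01 : ℝ} (hp : p ≠ 1) (hx : (1 - p) * x01 = g - p)
    (hg : g * (1 - p ^ 2 + 2 * p ^ 3 - p ^ 4) = p ^ 2 * (2 + 2 * p - 5 * p ^ 2 + 2 * p ^ 3)) :
    Holds p (backSubst p g x01) := by
  refine ⟨by dsimp only [backSubst]; linear_combination -hx, ?_, rfl, rfl, rfl⟩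
  refine mul_left_cancel₀ (sub_ne_zero.2 hp.symm) ?_
  dsimp only [backSubst]
  linear_combination hg + (p * (1 - (1 - p) ^ 2 - p * (1 - p) ^ 2)) * hx

theorem holds_solution (hp : p ≠ 1) (hden : 1 - p ^ 2 + 2 * p ^ 3 - p ^ 4 ≠ 0) :
    Holds p (solution p) :=
  holds_backSubst hp (mul_div_cancel₀ _ (sub_ne_zero.2 hp.symm)) (div_mul_cancel₀ _ hden)

theorem Holds.eq_solution (h : Holds p v) (hp : p ≠ 1)
    (hden : 1 - p ^ 2 + 2 * p ^ 3 - p ^ 4 ≠ 0) : v = solution p := by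
  rw [h.eq_backSubst, h.x01_eq hp, h.gain_eq hden, solution]

end PotentialSystem

open PotentialSystem in
theorem deviating_strategy_potential_system_general (p : ℝ) (hp1 : p < 1)
    (hden : 1 - p ^ 2 + 2 * p ^ 3 - p ^ 4 ≠ 0) :
    (∃! v : ℝ × ℝ × ℝ × ℝ × ℝ,
      0 = p * (1 - v.1) + (1 - p) * v.2.1 - v.1 * (1 - p)
      ∧ v.2.1 = p * v.2.2.1 + (1 - p) * v.2.1 - v.1 * (1 - p)
      ∧ v.2.2.1 = p * (2 - v.1) + (1 - p) * v.2.2.2.1 - v.1 * (1 - p)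
      ∧ v.2.2.2.1 = p * v.2.2.2.2 + (1 - p) * v.2.1 - v.1 * (1 - p)
      ∧ v.2.2.2.2 = p * (3 - v.1) + (1 - p) * v.2.1 - v.1 * (1 - p))
    ∧ ∀ g x01 x11 x12 x22 : ℝ,
        0 = p * (1 - g) + (1 - p) * x01 - g * (1 - p) →
        x01 = p * x11 + (1 - p) * x01 - g * (1 - p) →
        x11 = p * (2 - g) + (1 - p) * x12 - g * (1 - p) →
        x12 = p * x22 + (1 - p) * x01 - g * (1 - p) →
        x22 = p * (3 - g) + (1 - p) * x01 - g * (1 - p) →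
        g = p ^ 2 * (2 + 2 * p - 5 * p ^ 2 + 2 * p ^ 3)
              / (1 - p ^ 2 + 2 * p ^ 3 - p ^ 4)
          ∧ x01 = (g - p) / (1 - p) := by
  have hp : p ≠ 1 := hp1.ne
  refine ⟨⟨solution p, holds_solution hp hden, fun v hv => Holds.eq_solution hv hp hden⟩, ?_⟩
  intro g x01 x11 x12 x22 h1 h2 h3 h4 h5
  have h : Holds p (g, x01, x11, x12, x22) := ⟨h1, h2, h3, h4, h5⟩
  exact ⟨h.gain_eq hden, h.x01_eq hp⟩

/-- For `0 < p < 1` with `1 − p² + 2p³ − p⁴ ≠ 0`, the linear system defining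
the potential of the deviating strategy with mining states
`{(0,0), (0,1), (1,1), (1,2), (2,2)}` and capitulation landing state `s = 1`
in the immediate-release game truncated at `d = 3` — in the unknowns
`(ĝ, x₀₁, x₁₁, x₁₂, x₂₂)`:
(i)   `0 = p(1 − ĝ) + (1−p)x₀₁ − ĝ(1−p)`;
(ii)  `x₀₁ = p·x₁₁ + (1−p)x₀₁ − ĝ(1−p)`;
(iii) `x₁₁ = p(2 − ĝ) + (1−p)x₁₂ − ĝ(1−p)`;
(iv)  `x₁₂ = p·x₂₂ + (1−p)x₀₁ − ĝ(1−p)`;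
(v)   `x₂₂ = p(3 − ĝ) + (1−p)x₀₁ − ĝ(1−p)` —
has a unique solution, in which
`ĝ = p²(2 + 2p − 5p² + 2p³)/(1 − p² + 2p³ − p⁴)` and `x₀₁ = (ĝ − p)/(1 − p)`. -/
theorem deviating_strategy_potential_system (p : ℝ) (hp0 : 0 < p) (hp1 : p < 1)
    (hden : 1 - p ^ 2 + 2 * p ^ 3 - p ^ 4 ≠ 0) :
    (∃! v : ℝ × ℝ × ℝ × ℝ × ℝ,
      0 = p * (1 - v.1) + (1 - p) * v.2.1 - v.1 * (1 - p)
      ∧ v.2.1 = p * v.2.2.1 + (1 - p) * v.2.1 - v.1 * (1 - p)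
      ∧ v.2.2.1 = p * (2 - v.1) + (1 - p) * v.2.2.2.1 - v.1 * (1 - p)
      ∧ v.2.2.2.1 = p * v.2.2.2.2 + (1 - p) * v.2.1 - v.1 * (1 - p)
      ∧ v.2.2.2.2 = p * (3 - v.1) + (1 - p) * v.2.1 - v.1 * (1 - p))
    ∧ ∀ g x01 x11 x12 x22 : ℝ,
        0 = p * (1 - g) + (1 - p) * x01 - g * (1 - p) →
        x01 = p * x11 + (1 - p) * x01 - g * (1 - p) →
        x11 = p * (2 - g) + (1 - p) * x12 - g * (1 - p) →
        x12 = p * x22 + (1 - p) * x01 - g * (1 - p) →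
        x22 = p * (3 - g) + (1 - p) * x01 - g * (1 - p) →
        g = p ^ 2 * (2 + 2 * p - 5 * p ^ 2 + 2 * p ^ 3)
              / (1 - p ^ 2 + 2 * p ^ 3 - p ^ 4)
          ∧ x01 = (g - p) / (1 - p) :=
  deviating_strategy_potential_system_general p hp1 hden
end

section
/- Fix a real number p with 0.455 ≤ p < 1/2. Then p²·(2 + 2p − 5p² + 2p³)/(1 − p² + 2p³ − p⁴) > p; that is, the expected gain per level ĝ of the explicit deviating strategy strictly exceeds the fair share p, so FRONTIER is not a best response for a miner with relative computational power p ≥ 0.455 against honest FRONTIER miners in the immediate-release game. -/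
/-- For `0.455 ≤ p < 1/2`, the expected gain per level
`ĝ = p²(2 + 2p − 5p² + 2p³)/(1 − p² + 2p³ − p⁴)` of the explicit deviating
strategy in the immediate-release game strictly exceeds the fair share `p`;
hence FRONTIER is not a best response for a miner with relative computational
power `p ≥ 0.455`. -/
theorem deviating_strategy_beats_fair_share (p : ℝ)
    (hp : 0.455 ≤ p) (hp2 : p < 1 / 2) :
    p < p ^ 2 * (2 + 2 * p - 5 * p ^ 2 + 2 * p ^ 3)
          / (1 - p ^ 2 + 2 * p ^ 3 - p ^ 4) := by
  have hp0 : (0:ℝ) < p := by linarith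
  have hD : (0:ℝ) < 1 - p ^ 2 + 2 * p ^ 3 - p ^ 4 := by
    nlinarith [mul_pos (pow_pos hp0 3) (show (0:ℝ) < 2 - p by linarith),
      mul_lt_mul_of_pos_left hp2 hp0]
  rw [lt_div_iff₀ hD]
  nlinarith [mul_nonneg (sub_nonneg.2 hp) (le_of_lt (sub_pos.2 hp2)),
    sq_nonneg (p - 0.455), sq_nonneg (p - 0.5), mul_pos hp0 hp0,
    mul_nonneg (mul_nonneg (sub_nonneg.2 hp) (sub_nonneg.2 hp)) (le_of_lt (sub_pos.2 hp2))]
end
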